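/- arXiv:2106.06612 — 6 statements merged into one kernel-verified Lean document; each statement's English description precedes it below -/
import Mathlib

section
/- Let {E_n}_{n≥1} be a sequence of diagonal projections on H such that ∑_{n≥1} E_n = I + K (convergence in the weak operator topology) for some compact operator K. Then there exists an integer n_0 ≥ 1 such that: (i) E_n E_m = δ_{nm} E_n for all m, n > n_0; (ii) E_n E_m is a finite-rank projection for all 1 ≤ m, n ≤ n_0 with m ≠ n; (iii) for each N ≥ n_0, E^{(N)} := ∑_{n > N} E_n is a diagonal projection and E^{(N)} E_n = 0 for all n = 1, ..., N. -/
open Filter Topology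
open scoped InnerProductSpace

noncomputable section

variable {H : Type*} [NormedAddCommGroup H] [InnerProductSpace ℂ H] [CompleteSpace H]

/-- A (two-sided) operator ideal of `B(H)`. -/
def IsOpIdeal (J : Set (H →L[ℂ] H)) : Prop :=
  (0 : H →L[ℂ] H) ∈ J ∧
  (∀ A B : H →L[ℂ] H, A ∈ J → B ∈ J → A + B ∈ J) ∧
  (∀ A B : H →L[ℂ] H, B ∈ J → A * B ∈ J) ∧
  (∀ A B : H →L[ℂ] H, A ∈ J → A * B ∈ J)

/-- A proper operator ideal: `{0} ≠ J ≠ B(H)`. -/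
def IsProperOpIdeal (J : Set (H →L[ℂ] H)) : Prop :=
  IsOpIdeal J ∧ J ≠ {0} ∧ J ≠ Set.univ

/-- Orthogonal (self-adjoint, idempotent) projection. -/
def IsOrthogonalProjection (P : H →L[ℂ] H) : Prop :=
  IsSelfAdjoint P ∧ P * P = P

/-- Diagonal with respect to the fixed orthonormal basis `e`. -/
def IsDiagonalOp (e : HilbertBasis ℕ ℂ H) (A : H →L[ℂ] H) : Prop :=
  ∀ m n : ℕ, m ≠ n → ⟪A (e m), e n⟫_ℂ = 0

def IsDiagonalProjection (e : HilbertBasis ℕ ℂ H) (P : H →L[ℂ] H) : Prop :=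
  IsOrthogonalProjection P ∧ IsDiagonalOp e P

/-- Membership in the restricted unitary group `U_J(H) = U(H) ∩ (I + J)`. -/
def InRestrictedUnitary (J : Set (H →L[ℂ] H)) (U : H →L[ℂ] H) : Prop :=
  U ∈ unitary (H →L[ℂ] H) ∧ U - 1 ∈ J

/-- `A` is `U_J(H)`-diagonalizable with respect to `e`. -/
def RestrictedDiagonalizable (e : HilbertBasis ℕ ℂ H) (J : Set (H →L[ℂ] H))
    (A : H →L[ℂ] H) : Prop :=
  ∃ U : H →L[ℂ] H, InRestrictedUnitary J U ∧ IsDiagonalOp e (U * A * star U)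

/-- Convergence of the partial sums of the series `∑ T n` to `S` in the weak operator
topology. -/
def WOTSum (T : ℕ → H →L[ℂ] H) (S : H →L[ℂ] H) : Prop :=
  ∀ x y : H, Tendsto (fun N : ℕ => ∑ n ∈ Finset.range N, ⟪T n x, y⟫_ℂ)
    atTop (nhds ⟪S x, y⟫_ℂ)

/-- Decomposition of the identity: mutually orthogonal self-adjoint projections summing
to the identity in the strong operator topology. -/
def IsDecompositionOfIdentity (P : ℕ → H →L[ℂ] H) : Prop :=
  (∀ n, IsOrthogonalProjection (P n)) ∧ (∀ m n, m ≠ n → P m * P n = 0) ∧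
  (∀ x : H, HasSum (fun n => P n x) x)

/-- `A` is diagonalizable with infinite point spectrum, distinct eigenvalues `lam` and
spectral projections `P`. -/
def SpectralDataOf (A : H →L[ℂ] H) (lam : ℕ → ℂ) (P : ℕ → H →L[ℂ] H) : Prop :=
  IsDecompositionOfIdentity P ∧ (∀ n, P n ≠ 0) ∧ Function.Injective lam ∧
  (∀ x : H, HasSum (fun n => lam n • P n x) (A x))

/-- Finite rank operator. -/
def IsFiniteRankOp (T : H →L[ℂ] H) : Prop :=
  FiniteDimensional ℂ (LinearMap.range (T : H →ₗ[ℂ] H))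

/-- The `n`-th approximation number (= `(n+1)`-th singular value for compact operators). -/
noncomputable def sNum (T : H →L[ℂ] H) (n : ℕ) : ℝ :=
  sInf {c : ℝ | ∃ F : H →L[ℂ] H, IsFiniteRankOp F ∧
    Module.finrank ℂ (LinearMap.range (F : H →ₗ[ℂ] H)) ≤ n ∧ c = ‖T - F‖}

/-- The arithmetic mean closure `J^{-am}` of an operator ideal. -/
def amClosure (J : Set (H →L[ℂ] H)) : Set (H →L[ℂ] H) :=
  {A | IsCompactOperator ⇑A ∧ ∃ B ∈ J, ∃ M : ℝ, 0 < M ∧ ∀ n : ℕ,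
    (∑ k ∈ Finset.range (n + 1), sNum A k) ≤ M * (∑ k ∈ Finset.range (n + 1), sNum B k)}

/-- `(P, Q)` is a Fredholm pair of projections with essential codimension `[P : Q] = 0`. -/
def EssCodimZero (P Q : H →L[ℂ] H) : Prop :=
  IsClosed (⇑Q '' (LinearMap.range (P : H →ₗ[ℂ] H) : Set H)) ∧
  FiniteDimensional ℂ
    ↥(LinearMap.ker (Q : H →ₗ[ℂ] H) ⊓ LinearMap.range (P : H →ₗ[ℂ] H)) ∧
  FiniteDimensional ℂ
    ↥(LinearMap.range (Q : H →ₗ[ℂ] H) ⊓ LinearMap.ker (P : H →ₗ[ℂ] H)) ∧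
  Module.finrank ℂ
    ↥(LinearMap.ker (Q : H →ₗ[ℂ] H) ⊓ LinearMap.range (P : H →ₗ[ℂ] H)) =
  Module.finrank ℂ
    ↥(LinearMap.range (Q : H →ₗ[ℂ] H) ⊓ LinearMap.ker (P : H →ₗ[ℂ] H))

/-- Hilbert–Schmidt operator. -/
def IsHilbertSchmidt (T : H →L[ℂ] H) : Prop :=
  ∀ b : HilbertBasis ℕ ℂ H, Summable (fun n => ‖T (b n)‖ ^ 2)

/-- Partial isometry: isometric on the orthogonal complement of its kernel. -/
def IsPartialIsometryOp (V : H →L[ℂ] H) : Prop :=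
  ∀ x ∈ (LinearMap.ker (V : H →ₗ[ℂ] H))ᗮ, ‖V x‖ = ‖x‖

/-!
Every diagonal projection is `e.diagProj T`, the projection onto the closed span of
`{e k | k ∈ T}`, so `E n = e.diagProj (S n)`. Testing the series on `(e k, e k)` shows that `k` lies in exactly
`1 + ⟪K e k, e k⟫` of the sets `S n`; as `⟪K e k, e k⟫ → 0` for compact `K`, all but finitely many
`k` lie in exactly one `S n`. So all overlaps `S m ∩ S n` lie in one finite set, which meets only
finitely many `S n`; beyond those the `S n` are pairwise disjoint, and `E^{(N)}` is the projection
onto the union of the tail supports.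
-/

section Orthonormal

variable {ι 𝕜 E : Type*} [RCLike 𝕜] [NormedAddCommGroup E] [InnerProductSpace 𝕜 E]

theorem Orthonormal.tendsto_inner_right_cofinite {v : ι → E} (hv : Orthonormal 𝕜 v) (x : E) :
    Tendsto (fun i => ⟪x, v i⟫_𝕜) cofinite (𝓝 0) := by
  have hsq := (hv.inner_products_summable x).tendsto_cofinite_zero
  rw [tendsto_zero_iff_norm_tendsto_zero]
  simpa [norm_inner_symm] using hsq.sqrt

theorem IsCompactOperator.tendsto_inner_orthonormal_cofinite {K : E →L[𝕜] E}
    (hK : IsCompactOperator K) {v : ι → E} (hv : Orthonormal 𝕜 v) :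
    Tendsto (fun i => ⟪K (v i), v i⟫_𝕜) cofinite (𝓝 0) := by
  rw [Metric.tendsto_nhds]
  intro ε hε
  obtain ⟨C, hC, hKC⟩ := IsCompactOperator.image_subset_compact_of_bounded
    (f := (K : E →ₗ[𝕜] E)) hK (S := Set.range v)
    (isBounded_iff_forall_norm_le.mpr ⟨1, by rintro _ ⟨i, rfl⟩; exact (hv.1 i).le⟩)
  obtain ⟨t, -, ht, hCt⟩ := hC.finite_cover_balls (half_pos hε)
  have hsmall : ∀ᶠ i in cofinite, ∀ y ∈ t, ‖⟪y, v i⟫_𝕜‖ < ε / 2 :=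
    (eventually_all_finite ht).mpr fun y _ =>
      (hv.tendsto_inner_right_cofinite y).norm.eventually_lt_const (by simpa using half_pos hε)
  filter_upwards [hsmall] with i hi
  obtain ⟨y, hy, hKy⟩ := Set.mem_iUnion₂.mp (hCt (hKC ⟨v i, Set.mem_range_self i, rfl⟩))
  rw [dist_zero_right]
  calc ‖⟪K (v i), v i⟫_𝕜‖ = ‖⟪K (v i) - y, v i⟫_𝕜 + ⟪y, v i⟫_𝕜‖ := by
        rw [← inner_add_left, sub_add_cancel]
    _ ≤ ‖K (v i) - y‖ * ‖v i‖ + ‖⟪y, v i⟫_𝕜‖ :=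
        (norm_add_le _ _).trans (by gcongr; exact norm_inner_le_norm _ _)
    _ < ε / 2 * 1 + ε / 2 := by
        rw [hv.1 i]
        gcongr
        · simpa [dist_eq_norm] using hKy
        · exact hi y hy
    _ = ε := by ring

end Orthonormal

theorem finite_and_eq_ncard_of_tendsto_sum_indicator {R : Type*} [NormedRing R] [Nontrivial R]
    {A : Set ℕ} {c : R}
    (h : Tendsto (fun N => ∑ n ∈ Finset.range N, A.indicator 1 n) atTop (𝓝 c)) :
    A.Finite ∧ c = A.ncard := by
  have hterm : Tendsto (fun n => A.indicator (1 : ℕ → R) n) atTop (𝓝 0) := by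
    simpa [Finset.sum_range_succ_sub_sum] using (h.comp (tendsto_add_atTop_nat 1)).sub h
  obtain ⟨N₀, hN₀⟩ := eventually_atTop.mp
    (hterm.norm.eventually_lt_const (u := ‖(1 : R)‖) (by simp))
  have hA : A ⊆ Set.Iio N₀ := fun n hn => by
    by_contra hle
    simpa [Set.indicator_of_mem hn] using hN₀ n (not_lt.mp hle)
  have hfin : A.Finite := (Set.finite_Iio N₀).subset hA
  refine ⟨hfin, tendsto_nhds_unique h (tendsto_const_nhds.congr' ?_)⟩
  filter_upwards [eventually_ge_atTop N₀] with N hN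
  have hsub : hfin.toFinset ⊆ Finset.range N := fun n hn =>
    Finset.mem_range.mpr ((hA (hfin.mem_toFinset.mp hn)).trans_le hN)
  rw [← hfin.coe_toFinset, Finset.sum_indicator_subset _ hsub, Set.ncard_coe_finset]
  simp

theorem Nat.eq_of_norm_natCast_sub_lt_one {a n : ℕ} (h : ‖(a : ℂ) - n‖ < 1) : a = n := by
  have hcast : (a : ℂ) - n = (((a : ℤ) - n : ℤ) : ℂ) := by push_cast; rfl
  rw [hcast, Complex.norm_intCast, ← Int.cast_abs, ← Int.cast_one, Int.cast_lt,
    Int.abs_lt_one_iff] at h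
  omega

theorem exists_pairwise_disjoint_tail {ι : Type*} (S : ℕ → Set ι)
    (hfin : ∀ k, {n | k ∈ S n}.Finite)
    (hoverlap : {k | ∃ m n, m ≠ n ∧ k ∈ S m ∧ k ∈ S n}.Finite) :
    ∃ n₀, ∀ m n, n₀ < m → m ≠ n → Disjoint (S m) (S n) := by
  obtain ⟨n₀, hn₀⟩ := (hoverlap.biUnion fun k _ => hfin k).bddAbove
  refine ⟨n₀, fun m n hm hmn => Set.disjoint_left.mpr fun k hkm hkn => ?_⟩
  exact hm.not_ge (hn₀ (Set.mem_biUnion ⟨m, n, hmn, hkm, hkn⟩ hkm))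

namespace HilbertBasis

variable {ι 𝕜 E : Type*} [RCLike 𝕜] [NormedAddCommGroup E] [InnerProductSpace 𝕜 E]

theorem continuousLinearMap_ext {F : Type*} [TopologicalSpace F] [AddCommMonoid F] [Module 𝕜 F]
    [T2Space F] (e : HilbertBasis ι 𝕜 E) {A B : E →L[𝕜] F} (h : ∀ i, A (e i) = B (e i)) :
    A = B :=
  ContinuousLinearMap.ext_on (Submodule.dense_iff_topologicalClosure_eq_top.mpr e.dense_span)
    (Set.forall_mem_range.mpr h)

theorem eq_inner_smul_of_inner_eq_zero (e : HilbertBasis ι 𝕜 E) {x : E} {i : ι}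
    (h : ∀ j, j ≠ i → ⟪e j, x⟫_𝕜 = 0) : x = ⟪e i, x⟫_𝕜 • e i := by
  refine (e.hasSum_repr x).unique ?_
  simpa only [e.repr_apply_apply] using hasSum_single i fun j hj => by rw [h j hj, zero_smul]

variable [CompleteSpace E]

def diagProj (e : HilbertBasis ι 𝕜 E) (T : Set ι) : E →L[𝕜] E :=
  (Submodule.span 𝕜 (e '' T)).topologicalClosure.starProjection

variable (e : HilbertBasis ι 𝕜 E) {T : Set ι} {i : ι}

theorem diagProj_apply_of_mem (hi : i ∈ T) : e.diagProj T (e i) = e i :=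
  Submodule.starProjection_eq_self_iff.mpr
    (Submodule.le_topologicalClosure _ (Submodule.subset_span ⟨i, hi, rfl⟩))

theorem diagProj_apply_of_notMem (hi : i ∉ T) : e.diagProj T (e i) = 0 := by
  rw [diagProj, Submodule.starProjection_apply_eq_zero_iff, Submodule.orthogonal_closure,
    Submodule.mem_orthogonal]
  refine fun u hu => Submodule.mem_orthogonal_singleton_iff_inner_left.mp
    (Submodule.span_le.mpr ?_ hu)
  rintro _ ⟨j, hj, rfl⟩
  exact Submodule.mem_orthogonal_singleton_iff_inner_left.mpr
    (e.orthonormal.2 fun hji => hi (hji ▸ hj))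

theorem inner_diagProj_apply_self (T : Set ι) (i : ι) :
    ⟪e.diagProj T (e i), e i⟫_𝕜 = T.indicator 1 i := by
  by_cases hi : i ∈ T
  · rw [e.diagProj_apply_of_mem hi, Set.indicator_of_mem hi, inner_self_eq_norm_sq_to_K,
      e.orthonormal.1 i]
    simp
  · rw [e.diagProj_apply_of_notMem hi, Set.indicator_of_notMem hi, inner_zero_left]

theorem isSelfAdjoint_diagProj (T : Set ι) : IsSelfAdjoint (e.diagProj T) :=
  isSelfAdjoint_starProjection _

theorem diagProj_mul_self (T : Set ι) : e.diagProj T * e.diagProj T = e.diagProj T :=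
  Submodule.isIdempotentElem_starProjection _

theorem diagProj_mul_diagProj (A B : Set ι) :
    e.diagProj A * e.diagProj B = e.diagProj (A ∩ B) := by
  refine e.continuousLinearMap_ext fun i => ?_
  by_cases hB : i ∈ B
  · by_cases hA : i ∈ A
    · simp [diagProj_apply_of_mem, hA, hB]
    · simp [diagProj_apply_of_mem, diagProj_apply_of_notMem, hA, hB]
  · simp [diagProj_apply_of_notMem, hB]

theorem diagProj_empty : e.diagProj ∅ = 0 :=
  e.continuousLinearMap_ext fun i => diagProj_apply_of_notMem e (Set.notMem_empty i)

theorem sum_diagProj {κ : Type*} (s : Finset κ) (A : κ → Set ι)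
    (hA : (s : Set κ).PairwiseDisjoint A) :
    ∑ n ∈ s, e.diagProj (A n) = e.diagProj (⋃ n ∈ s, A n) := by
  refine e.continuousLinearMap_ext fun i => ?_
  rw [_root_.sum_apply]
  by_cases hi : i ∈ ⋃ n ∈ s, A n
  · obtain ⟨n, hn, hin⟩ := Set.mem_iUnion₂.mp hi
    rw [Finset.sum_eq_single_of_mem n hn fun m hm hmn => diagProj_apply_of_notMem e
      fun him => Set.disjoint_left.mp (hA hm hn hmn) him hin, diagProj_apply_of_mem e hin,
      diagProj_apply_of_mem e hi]
  · rw [diagProj_apply_of_notMem e hi]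
    exact Finset.sum_eq_zero fun n hn => diagProj_apply_of_notMem e
      fun hin => hi (Set.mem_biUnion hn hin)

theorem finiteDimensional_range_diagProj (hT : T.Finite) :
    FiniteDimensional 𝕜 (LinearMap.range (e.diagProj T : E →ₗ[𝕜] E)) := by
  have : FiniteDimensional 𝕜 (Submodule.span 𝕜 (e '' T)) :=
    FiniteDimensional.span_of_finite 𝕜 (hT.image e)
  rw [diagProj, Submodule.range_starProjection,
    (Submodule.closed_of_finiteDimensional _).submodule_topologicalClosure_eq]
  infer_instance

theorem tendsto_diagProj_iUnion {κ : Type*} [Preorder κ] (A : κ → Set ι) (hA : Monotone A)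
    (x : E) :
    Tendsto (fun n => e.diagProj (A n) x) atTop (𝓝 (e.diagProj (⋃ n, A n) x)) := by
  set U : κ → Submodule 𝕜 E := fun n => (Submodule.span 𝕜 (e '' A n)).topologicalClosure
  have hU : Monotone U := fun m n hmn =>
    Submodule.topologicalClosure_mono (Submodule.span_mono (Set.image_mono (hA hmn)))
  have hsup : (⨆ n, U n).topologicalClosure =
      (Submodule.span 𝕜 (e '' ⋃ n, A n)).topologicalClosure := by
    apply le_antisymm
    · refine Submodule.topologicalClosure_minimal _ (iSup_le fun n => ?_)
        (Submodule.isClosed_topologicalClosure _)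
      exact Submodule.topologicalClosure_mono
        (Submodule.span_mono (Set.image_mono (Set.subset_iUnion A n)))
    · refine Submodule.topologicalClosure_mono (Submodule.span_le.mpr ?_)
      rintro _ ⟨i, hi, rfl⟩
      obtain ⟨n, hin⟩ := Set.mem_iUnion.mp hi
      exact le_iSup U n (Submodule.le_topologicalClosure _ (Submodule.subset_span ⟨i, hin, rfl⟩))
  simp only [diagProj, ← hsup]
  exact Submodule.starProjection_tendsto_closure_iSup U hU x

end HilbertBasis

section DiagonalProjections

variable (e : HilbertBasis ℕ ℂ H)

theorem isDiagonalProjection_diagProj (T : Set ℕ) : IsDiagonalProjection e (e.diagProj T) := by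
  refine ⟨⟨e.isSelfAdjoint_diagProj T, e.diagProj_mul_self T⟩, fun m n hmn => ?_⟩
  by_cases hm : m ∈ T
  · rw [e.diagProj_apply_of_mem hm]; exact e.orthonormal.2 hmn
  · rw [e.diagProj_apply_of_notMem hm, inner_zero_left]

theorem IsDiagonalProjection.eq_diagProj {P : H →L[ℂ] H} (hP : IsDiagonalProjection e P) :
    P = e.diagProj {k | P (e k) = e k} := by
  obtain ⟨⟨-, hidem⟩, hdiag⟩ := hP
  refine e.continuousLinearMap_ext fun k => ?_
  set c := ⟪e k, P (e k)⟫_ℂ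
  have hc : P (e k) = c • e k :=
    e.eq_inner_smul_of_inner_eq_zero fun j hj => inner_eq_zero_symm.mp (hdiag k j hj.symm)
  have hcc : IsIdempotentElem c := by
    have h : P (P (e k)) = P (e k) := congrArg (· (e k)) hidem
    rw [hc, map_smul, hc, smul_smul] at h
    exact smul_left_injective ℂ (e.orthonormal.ne_zero k) h
  rcases IsIdempotentElem.iff_eq_zero_or_one.mp hcc with h0 | h1
  · have : P (e k) = 0 := by rw [hc, h0, zero_smul]
    rw [this, e.diagProj_apply_of_notMem]
    simpa [this, eq_comm] using e.orthonormal.ne_zero k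
  · have : P (e k) = e k := by rw [hc, h1, one_smul]
    rw [this, e.diagProj_apply_of_mem this]

theorem exists_diagProj_tail_sum (S : ℕ → Set ℕ) (N : ℕ)
    (hS : ∀ m n, N < m → m ≠ n → Disjoint (S m) (S n)) :
    ∃ EN : H →L[ℂ] H, IsDiagonalProjection e EN ∧
      (∀ x y : H, Tendsto (fun M : ℕ => ∑ n ∈ Finset.Ioc N M, ⟪e.diagProj (S n) x, y⟫_ℂ)
        atTop (nhds ⟪EN x, y⟫_ℂ)) ∧
      ∀ n, n ≤ N → EN * e.diagProj (S n) = 0 := by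
  set U : ℕ → Set ℕ := fun M => ⋃ n ∈ Finset.Ioc N M, S n
  have hU : Monotone U := fun M M' h =>
    Set.biUnion_subset_biUnion_left (Finset.coe_subset.mpr (Finset.Ioc_subset_Ioc_right h))
  refine ⟨e.diagProj (⋃ M, U M), isDiagonalProjection_diagProj e _, fun x y => ?_, fun n hn => ?_⟩
  · have hpartial : ∀ M, ∑ n ∈ Finset.Ioc N M, e.diagProj (S n) = e.diagProj (U M) := fun M =>
      e.sum_diagProj _ S fun m hm n _ hmn => hS m n (Finset.mem_Ioc.mp hm).1 hmn
    simp_rw [← sum_inner, ← _root_.sum_apply, hpartial]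
    exact (e.tendsto_diagProj_iUnion U hU x).inner tendsto_const_nhds
  · have hdisj : Disjoint (⋃ M, U M) (S n) := by
      simp only [U, Set.disjoint_iUnion_left]
      intro M m hm
      exact hS m n (Finset.mem_Ioc.mp hm).1 (hn.trans_lt (Finset.mem_Ioc.mp hm).1).ne'
    rw [e.diagProj_mul_diagProj, hdisj.inter_eq, e.diagProj_empty]

end DiagonalProjections

/-- Lemma on diagonal projections summing to `I + K`, `K` compact. -/
theorem diagonal_projections_sum_identity_plus_compact
    (e : HilbertBasis ℕ ℂ H) (E : ℕ → H →L[ℂ] H)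
    (hE : ∀ n, IsDiagonalProjection e (E n))
    (K : H →L[ℂ] H) (hK : IsCompactOperator ⇑K)
    (hsum : WOTSum E (1 + K)) :
    ∃ n₀ : ℕ,
      (∀ m n, n₀ < m → n₀ < n → m ≠ n → E m * E n = 0) ∧
      (∀ m n, m ≤ n₀ → n ≤ n₀ → m ≠ n →
        IsFiniteRankOp (E m * E n) ∧ IsOrthogonalProjection (E m * E n)) ∧
      (∀ N, n₀ ≤ N → ∃ EN : H →L[ℂ] H, IsDiagonalProjection e EN ∧
        (∀ x y : H, Tendsto (fun M : ℕ => ∑ n ∈ Finset.Ioc N M, ⟪E n x, y⟫_ℂ)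
          atTop (nhds ⟪EN x, y⟫_ℂ)) ∧
        ∀ n, n ≤ N → EN * E n = 0) := by
  obtain ⟨S, rfl⟩ : ∃ S : ℕ → Set ℕ, E = fun n => e.diagProj (S n) :=
    ⟨_, funext fun n => (hE n).eq_diagProj e⟩
  have hmult : ∀ k, {n | k ∈ S n}.Finite ∧ 1 + ⟪K (e k), e k⟫_ℂ = {n | k ∈ S n}.ncard := by
    intro k
    classical
    refine finite_and_eq_ncard_of_tendsto_sum_indicator ?_
    simpa [e.inner_diagProj_apply_self, Set.indicator_apply, inner_add_left,
      inner_self_eq_norm_sq_to_K, e.orthonormal.1 k] using hsum (e k) (e k)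
  have hsimple : ∀ᶠ k in cofinite, {n | k ∈ S n}.ncard = 1 := by
    filter_upwards [(hK.tendsto_inner_orthonormal_cofinite e.orthonormal).norm.eventually_lt_const
      (by simp : ‖(0 : ℂ)‖ < 1)] with k hk
    refine Nat.eq_of_norm_natCast_sub_lt_one ?_
    rwa [← (hmult k).2, Nat.cast_one, add_sub_cancel_left]
  have hoverlap : {k | ∃ m n, m ≠ n ∧ k ∈ S m ∧ k ∈ S n}.Finite := by
    refine (eventually_cofinite.mp hsimple).subset fun k ⟨m, n, hmn, hm, hn⟩ => ?_
    exact ((Set.one_lt_ncard_iff (hmult k).1).mpr ⟨m, n, hm, hn, hmn⟩).ne'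
  obtain ⟨n₀, hn₀⟩ := exists_pairwise_disjoint_tail S (fun k => (hmult k).1) hoverlap
  refine ⟨n₀, fun m n hm _ hmn => ?_, fun m n _ _ hmn => ?_, fun N hN => ?_⟩
  · rw [e.diagProj_mul_diagProj, (hn₀ m n hm hmn).inter_eq, e.diagProj_empty]
  · rw [e.diagProj_mul_diagProj]
    exact ⟨e.finiteDimensional_range_diagProj (hoverlap.subset fun k hk => ⟨m, n, hmn, hk⟩),
      (isDiagonalProjection_diagProj e _).1⟩
  · exact exists_diagProj_tail_sum e S N fun m n hm => hn₀ m n (hN.trans_lt hm)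
end
end

section
/- Let J be a proper operator ideal in B(H) and let {P_n}_{n≥1} be a decomposition of the identity. Suppose there is a family {E_n}_{n≥1} of diagonal projections such that the series ∑_{n≥1} (I − E_n) P_n and ∑_{n≥1} E_n (I − P_n) converge in the weak operator topology to operators belonging to J. Then P_n − E_n ∈ J for all n ≥ 1. -/
open Filter Topology
open scoped InnerProductSpace

noncomputable section

variable {H : Type*} [NormedAddCommGroup H] [InnerProductSpace ℂ H] [CompleteSpace H]

/-!
For projections `p`, `q` put `X = (1 - q) p` and `Y = q (1 - p)`; then
`X + X* + Y + Y* = 2 (p - q)²` and `p - q = X + X* - (p - q)²`.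
Right multiplication by `P n` kills every term of `∑ (1 - E m) P m` but the `n`-th, so
`(1 - E n) P n = S₁ P n ∈ J`. The symmetrised series `∑ (Xₘ + Xₘ* + Yₘ + Yₘ*)` has positive
terms `2 (P m - E m)²` and sum `S₁ + S₁* + S₂ + S₂* ∈ J`, which therefore dominates
`2 (P n - E n)²`. Operator ideals are self-adjoint and hereditary (both by Douglas' factorisation
lemma applied to square roots), hence `(P n - E n)² ∈ J` and so `P n - E n ∈ J`.
-/

open scoped ComplexOrder

namespace IsStarProjection

variable {R : Type*} [Ring R] [StarRing R] {p q : R}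

theorem two_mul_sub_sq (hp : IsStarProjection p) (hq : IsStarProjection q) :
    2 * (p - q) ^ 2 =
      (1 - q) * p + star ((1 - q) * p) + (q * (1 - p) + star (q * (1 - p))) := by
  simp only [star_mul, star_sub, hp.isSelfAdjoint.star_eq, hq.isSelfAdjoint.star_eq,
    sq, two_mul, mul_sub, sub_mul, mul_one, one_mul, hp.isIdempotentElem.eq,
    hq.isIdempotentElem.eq]
  abel

theorem sub_eq_add_star_sub_sq (hp : IsStarProjection p) (hq : IsStarProjection q) :
    p - q = (1 - q) * p + star ((1 - q) * p) - (p - q) ^ 2 := by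
  simp only [star_mul, star_sub, hp.isSelfAdjoint.star_eq, hq.isSelfAdjoint.star_eq,
    sq, mul_sub, sub_mul, one_mul, hp.isIdempotentElem.eq, hq.isIdempotentElem.eq]
  abel

end IsStarProjection

namespace ContinuousLinearMap

variable {𝕜 E F G : Type*} [RCLike 𝕜] [SeminormedAddCommGroup E] [NormedSpace 𝕜 E]
  [NormedAddCommGroup F] [NormedSpace 𝕜 F] [CompleteSpace F]
  [NormedAddCommGroup G] [InnerProductSpace 𝕜 G] [CompleteSpace G]

/-- Douglas' factorisation lemma. -/
theorem exists_eq_comp_of_norm_apply_le {A : E →L[𝕜] F} {B : E →L[𝕜] G}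
    (h : ∀ x, ‖A x‖ ≤ ‖B x‖) : ∃ W : G →L[𝕜] F, A = W ∘L B := by
  set K := (LinearMap.range (B : E →ₗ[𝕜] G)).topologicalClosure
  have hBK x : B x ∈ K := Submodule.le_topologicalClosure _ (LinearMap.mem_range_self _ x)
  let e : E →ₗ[𝕜] K := (B : E →ₗ[𝕜] G).codRestrict K hBK
  have he : DenseRange e := by
    rw [DenseRange, Subtype.dense_iff, ← Set.range_comp]
    exact (Submodule.topologicalClosure_coe _).le
  have hAe : ∃ C, ∀ x, ‖(A : E →ₗ[𝕜] F) x‖ ≤ C * ‖e x‖ :=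
    ⟨1, fun x => by rw [one_mul]; exact h x⟩
  refine ⟨((A : E →ₗ[𝕜] F).extendOfNorm e).comp K.orthogonalProjectionOnto, ?_⟩
  ext x
  have : K.orthogonalProjectionOnto (B x) = e x :=
    K.orthogonalProjectionOnto_mem_subspace_eq_self ⟨B x, hBK x⟩
  simp [this, LinearMap.extendOfNorm_eq he hAe]

end ContinuousLinearMap

section Operators

variable {E : Type*} [NormedAddCommGroup E] [InnerProductSpace ℂ E]

theorem norm_sqrt_apply_sq [CompleteSpace E] {C : E →L[ℂ] E} (hC : 0 ≤ C) (x : E) :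
    ‖CFC.sqrt C x‖ ^ 2 = RCLike.re ⟪C x, x⟫_ℂ := by
  have hsa : ContinuousLinearMap.adjoint (CFC.sqrt C) = CFC.sqrt C :=
    (IsSelfAdjoint.of_nonneg (CFC.sqrt_nonneg C)).adjoint_eq
  rw [ContinuousLinearMap.apply_norm_sq_eq_inner_adjoint_left, hsa]
  exact congrArg (fun T : E →L[ℂ] E => RCLike.re ⟪T x, x⟫_ℂ) (CFC.sqrt_mul_sqrt_self C hC)

theorem norm_sqrt_star_mul_self_apply [CompleteSpace E] (T : E →L[ℂ] E) (x : E) :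
    ‖CFC.sqrt (star T * T) x‖ = ‖T x‖ := by
  rw [← sq_eq_sq₀ (norm_nonneg _) (norm_nonneg _), norm_sqrt_apply_sq (star_mul_self_nonneg T),
    ContinuousLinearMap.apply_norm_sq_eq_inner_adjoint_left, ContinuousLinearMap.star_eq_adjoint]
  rfl

theorem norm_sqrt_apply_le_of_le [CompleteSpace E] {A C : E →L[ℂ] E} (hA : 0 ≤ A) (hAC : A ≤ C)
    (x : E) : ‖CFC.sqrt A x‖ ≤ ‖CFC.sqrt C x‖ := by
  rw [← sq_le_sq₀ (norm_nonneg _) (norm_nonneg _), norm_sqrt_apply_sq hA,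
    norm_sqrt_apply_sq (hA.trans hAC), ← sub_nonneg, ← map_sub, ← inner_sub_left]
  exact ((ContinuousLinearMap.le_def A C).mp hAC).re_inner_nonneg_left x

namespace IsOpIdeal

variable {J : Set (E →L[ℂ] E)}

theorem add_mem (hJ : IsOpIdeal J) {A B : E →L[ℂ] E} (hA : A ∈ J) (hB : B ∈ J) :
    A + B ∈ J :=
  hJ.2.1 A B hA hB

theorem mul_mem_left (hJ : IsOpIdeal J) (A : E →L[ℂ] E) {B : E →L[ℂ] E} (hB : B ∈ J) :
    A * B ∈ J :=
  hJ.2.2.1 A B hB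

theorem mul_mem_right (hJ : IsOpIdeal J) {A : E →L[ℂ] E} (B : E →L[ℂ] E) (hA : A ∈ J) :
    A * B ∈ J :=
  hJ.2.2.2 A B hA

theorem smul_mem (hJ : IsOpIdeal J) (c : ℂ) {A : E →L[ℂ] E} (hA : A ∈ J) : c • A ∈ J := by
  simpa using hJ.mul_mem_left (c • 1) hA

theorem sub_mem (hJ : IsOpIdeal J) {A B : E →L[ℂ] E} (hA : A ∈ J) (hB : B ∈ J) :
    A - B ∈ J := by
  simpa [sub_eq_add_neg] using hJ.add_mem hA (hJ.smul_mem (-1) hB)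

theorem star_mem [CompleteSpace E] (hJ : IsOpIdeal J) {T : E →L[ℂ] E} (hT : T ∈ J) :
    star T ∈ J := by
  obtain ⟨W₁, hW₁⟩ := ContinuousLinearMap.exists_eq_comp_of_norm_apply_le
    (fun x => (norm_sqrt_star_mul_self_apply T x).le)
  obtain ⟨W₂, hW₂⟩ := ContinuousLinearMap.exists_eq_comp_of_norm_apply_le
    (fun x => (norm_sqrt_star_mul_self_apply T x).ge)
  have hR : CFC.sqrt (star T * T) ∈ J := by rw [hW₁]; exact hJ.mul_mem_left W₁ hT
  have hRsa := (IsSelfAdjoint.of_nonneg (CFC.sqrt_nonneg (star T * T))).star_eq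
  have : star T = CFC.sqrt (star T * T) * star W₂ := by
    nth_rw 1 [hW₂]
    rw [← ContinuousLinearMap.mul_def, star_mul, hRsa]
  exact this ▸ hJ.mul_mem_right _ hR

theorem mem_of_nonneg_of_le [CompleteSpace E] (hJ : IsOpIdeal J) {A C : E →L[ℂ] E}
    (hA : 0 ≤ A) (hAC : A ≤ C) (hC : C ∈ J) : A ∈ J := by
  have hC₀ : 0 ≤ C := hA.trans hAC
  obtain ⟨W, hW⟩ := ContinuousLinearMap.exists_eq_comp_of_norm_apply_le
    (norm_sqrt_apply_le_of_le hA hAC)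
  have hsa (D : E →L[ℂ] E) : star (CFC.sqrt D) = CFC.sqrt D :=
    (IsSelfAdjoint.of_nonneg (CFC.sqrt_nonneg D)).star_eq
  have : A = W * C * star W := by
    rw [← CFC.sqrt_mul_sqrt_self A hA, ← CFC.sqrt_mul_sqrt_self C hC₀]
    nth_rw 2 [← hsa A]
    rw [hW, ← ContinuousLinearMap.mul_def, star_mul, hsa C]
    noncomm_ring
  exact this ▸ hJ.mul_mem_right _ (hJ.mul_mem_left W hC)

end IsOpIdeal

section WOTSum

variable {T T' : ℕ → E →L[ℂ] E} {S S' : E →L[ℂ] E}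

theorem WOTSum.add (h : WOTSum T S) (h' : WOTSum T' S') :
    WOTSum (fun n => T n + T' n) (S + S') := by
  intro x y
  simpa [inner_add_left, Finset.sum_add_distrib] using (h x y).add (h' x y)

theorem WOTSum.star [CompleteSpace E] (h : WOTSum T S) :
    WOTSum (fun n => star (T n)) (star S) := by
  intro x y
  have hconj (U : E →L[ℂ] E) : ⟪U.adjoint x, y⟫_ℂ = starRingEnd ℂ ⟪U y, x⟫_ℂ := by
    rw [ContinuousLinearMap.adjoint_inner_left, inner_conj_symm]
  simpa only [ContinuousLinearMap.star_eq_adjoint, hconj, map_sum, Function.comp_def]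
    using (Complex.continuous_conj.tendsto _).comp (h y x)

theorem WOTSum.mul_eq_of_mul_eq_zero (h : WOTSum T S) {R : E →L[ℂ] E} {n : ℕ}
    (hR : ∀ m, m ≠ n → T m * R = 0) : S * R = T n * R := by
  refine ContinuousLinearMap.ext fun x => ext_inner_right ℂ fun y => ?_
  refine tendsto_nhds_unique (h (R x) y) (tendsto_const_nhds.congr' ?_)
  filter_upwards [eventually_gt_atTop n] with N hN
  rw [Finset.sum_eq_single_of_mem n (Finset.mem_range.mpr hN)]
  · rfl
  · intro m _ hm
    change ⟪(T m * R) x, y⟫_ℂ = 0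
    rw [hR m hm, zero_apply, inner_zero_left]

theorem WOTSum.le_of_nonneg [CompleteSpace E] (h : WOTSum T S) (hT : ∀ m, 0 ≤ T m) (n : ℕ) :
    T n ≤ S := by
  have hinner m x : 0 ≤ ⟪T m x, x⟫_ℂ :=
    ((ContinuousLinearMap.nonneg_iff_isPositive _).mp (hT m)).inner_nonneg_left x
  rw [ContinuousLinearMap.le_def, ContinuousLinearMap.isPositive_iff_complex]
  intro x
  have hle : ⟪T n x, x⟫_ℂ ≤ ⟪S x, x⟫_ℂ := by
    refine ge_of_tendsto (h x x) ?_
    filter_upwards [eventually_gt_atTop n] with N hN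
    exact Finset.single_le_sum (fun m _ => hinner m x) (Finset.mem_range.mpr hN)
  have hz : 0 ≤ ⟪(S - T n) x, x⟫_ℂ := by
    rwa [sub_apply, inner_sub_left, sub_nonneg]
  obtain ⟨hre, him⟩ := RCLike.nonneg_iff.mp hz
  exact ⟨RCLike.conj_eq_iff_re.mp (RCLike.conj_eq_iff_im.mpr him), hre⟩

end WOTSum

end Operators

/-- Lemma: the differences `P n - E n` belong to the ideal. -/
theorem differences_in_ideal
    (e : HilbertBasis ℕ ℂ H) (J : Set (H →L[ℂ] H)) (hJ : IsProperOpIdeal J)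
    (P : ℕ → H →L[ℂ] H) (hP : IsDecompositionOfIdentity P)
    (E : ℕ → H →L[ℂ] H) (hE : ∀ n, IsDiagonalProjection e (E n))
    (S₁ S₂ : H →L[ℂ] H)
    (h₁ : WOTSum (fun n => (1 - E n) * P n) S₁) (hS₁ : S₁ ∈ J)
    (h₂ : WOTSum (fun n => E n * (1 - P n)) S₂) (hS₂ : S₂ ∈ J) :
    ∀ n, P n - E n ∈ J := by
  obtain ⟨hJ, -⟩ := hJ
  have hPproj m : IsStarProjection (P m) := ⟨(hP.1 m).2, (hP.1 m).1⟩
  have hEproj m : IsStarProjection (E m) := ⟨(hE m).1.2, (hE m).1.1⟩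
  intro n
  have hX : (1 - E n) * P n ∈ J := by
    have := h₁.mul_eq_of_mul_eq_zero (R := P n) fun m hm => by
      rw [mul_assoc, hP.2.1 m n hm, mul_zero]
    rw [mul_assoc, (hPproj n).isIdempotentElem.eq] at this
    exact this ▸ hJ.mul_mem_right _ hS₁
  have hpos m : 0 ≤ 2 * (P m - E m) ^ 2 := by
    have := ((hPproj m).isSelfAdjoint.sub (hEproj m).isSelfAdjoint).sq_nonneg
    rw [two_mul]
    exact add_nonneg this this
  have hsum := (h₁.add h₁.star).add (h₂.add h₂.star)
  simp only [← (hPproj _).two_mul_sub_sq (hEproj _)] at hsum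
  have hsq : 2 * (P n - E n) ^ 2 ∈ J :=
    hJ.mem_of_nonneg_of_le (hpos n) (hsum.le_of_nonneg hpos n)
      (hJ.add_mem (hJ.add_mem hS₁ (hJ.star_mem hS₁)) (hJ.add_mem hS₂ (hJ.star_mem hS₂)))
  have hsq' : (P n - E n) ^ 2 ∈ J := by
    have := hJ.smul_mem (2⁻¹ : ℂ) hsq
    rwa [two_mul, ← two_smul ℂ, inv_smul_smul₀ two_ne_zero] at this
  rw [(hPproj n).sub_eq_add_star_sub_sq (hEproj n)]
  exact hJ.sub_mem (hJ.add_mem hX (hJ.star_mem hX)) hsq'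

end
end

section
/- Let J be a proper operator ideal and let e = {e_n}_{n≥1}, f = {f_n}_{n≥1} be two orthonormal bases of H. Then e and f are J-equivalent if and only if for every (equivalently, for some) orthonormal basis g = {g_n}_{n≥1} of H, the unique bounded operator T ∈ B(H) with T g_n = e_n − f_n for all n ≥ 1 belongs to J. -/
open Filter Topology
open scoped InnerProductSpace

noncomputable section

variable {H : Type*} [NormedAddCommGroup H] [InnerProductSpace ℂ H] [CompleteSpace H]

noncomputable def basisMap (a b : HilbertBasis ℕ ℂ H) : H ≃ₗᵢ[ℂ] H :=
  a.repr.trans b.repr.symm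

lemma basisMap_apply (a b : HilbertBasis ℕ ℂ H) (n : ℕ) :
    basisMap a b (a n) = b n := by
  classical
  simp [basisMap, a.repr_self, b.repr_symm_single]

omit [CompleteSpace H] in
lemma clm_ext_basis (g : HilbertBasis ℕ ℂ H) {A B : H →L[ℂ] H}
    (h : ∀ n, A (g n) = B (g n)) : A = B := by
  refine ContinuousLinearMap.ext_on
    (Submodule.dense_iff_topologicalClosure_eq_top.mpr g.dense_span) ?_
  rintro x ⟨n, rfl⟩
  exact h n

lemma mem_unitary_of_isometryEquiv (V : H ≃ₗᵢ[ℂ] H) :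
    (V : H →L[ℂ] H) ∈ unitary (H →L[ℂ] H) := by
  constructor <;>
  · rw [LinearIsometryEquiv.star_eq_symm]
    ext x
    simp

/-- Corollary: `J`-equivalence of orthonormal bases. -/
theorem basis_J_equivalence_characterization
    (J : Set (H →L[ℂ] H)) (hJ : IsProperOpIdeal J)
    (e f : HilbertBasis ℕ ℂ H) :
    ((∃ W : H →L[ℂ] H, InRestrictedUnitary J W ∧ ∀ n, W (f n) = e n) ↔
      ∀ g : HilbertBasis ℕ ℂ H, ∀ T : H →L[ℂ] H,
        (∀ n, T (g n) = e n - f n) → T ∈ J) ∧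
    ((∃ W : H →L[ℂ] H, InRestrictedUnitary J W ∧ ∀ n, W (f n) = e n) ↔
      ∃ (g : HilbertBasis ℕ ℂ H) (T : H →L[ℂ] H),
        (∀ n, T (g n) = e n - f n) ∧ T ∈ J) := by
  obtain ⟨⟨h0, hadd, hleft, hright⟩, -, -⟩ := hJ
  -- forward direction
  have key1 : (∃ W : H →L[ℂ] H, InRestrictedUnitary J W ∧ ∀ n, W (f n) = e n) →
      ∀ g : HilbertBasis ℕ ℂ H, ∀ T : H →L[ℂ] H,
        (∀ n, T (g n) = e n - f n) → T ∈ J := by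
    rintro ⟨W, ⟨hWu, hWJ⟩, hWf⟩ g T hT
    have hTeq : T = (W - 1) * (basisMap g f : H →L[ℂ] H) := by
      refine clm_ext_basis g fun n => ?_
      simp [hT n, ContinuousLinearMap.mul_apply, ContinuousLinearMap.sub_apply,
        basisMap_apply, hWf n]
    rw [hTeq]
    exact hright _ _ hWJ
  -- "for all g" implies "some g"
  have key2 : (∀ g : HilbertBasis ℕ ℂ H, ∀ T : H →L[ℂ] H,
      (∀ n, T (g n) = e n - f n) → T ∈ J) →
      ∃ (g : HilbertBasis ℕ ℂ H) (T : H →L[ℂ] H),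
        (∀ n, T (g n) = e n - f n) ∧ T ∈ J := by
    intro hall
    have hT : ∀ n, ((basisMap f e : H →L[ℂ] H) - 1) (f n) = e n - f n := fun n => by
      simp [ContinuousLinearMap.sub_apply, basisMap_apply]
    exact ⟨f, _, hT, hall f _ hT⟩
  -- "some g" implies existence of W
  have key3 : (∃ (g : HilbertBasis ℕ ℂ H) (T : H →L[ℂ] H),
      (∀ n, T (g n) = e n - f n) ∧ T ∈ J) →
      ∃ W : H →L[ℂ] H, InRestrictedUnitary J W ∧ ∀ n, W (f n) = e n := by
    rintro ⟨g, T, hT, hTJ⟩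
    have hsymm : ∀ n, (basisMap g f).symm (f n) = g n := fun n => by
      rw [← basisMap_apply g f n, LinearIsometryEquiv.symm_apply_apply]
    refine ⟨(((basisMap g f).symm.trans (basisMap g e)) : H →L[ℂ] H),
      ⟨mem_unitary_of_isometryEquiv _, ?_⟩, fun n => by
        show ((basisMap g f).symm.trans (basisMap g e)) (f n) = e n
        rw [LinearIsometryEquiv.trans_apply, hsymm, basisMap_apply]⟩
    have hWeq : ((((basisMap g f).symm.trans (basisMap g e)) : H →L[ℂ] H) - 1)
        = T * ((basisMap g f).symm : H →L[ℂ] H) := by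
      refine clm_ext_basis f fun n => ?_
      have : ((basisMap g f).symm.trans (basisMap g e)) (f n) = e n := by
        rw [LinearIsometryEquiv.trans_apply, hsymm, basisMap_apply]
      simp only [ContinuousLinearMap.sub_apply, ContinuousLinearMap.mul_apply,
        ContinuousLinearMap.one_apply, LinearIsometryEquiv.coe_coe,
        ContinuousLinearEquiv.coe_coe, LinearIsometryEquiv.coe_toContinuousLinearEquiv,
        this, hsymm n, hT n]
    rw [hWeq]
    exact hright _ _ hTJ
  exact ⟨⟨key1, fun h => key3 (key2 h)⟩, ⟨fun h => key2 (key1 h), key3⟩⟩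


end
end

section
/- Let e = {e_n}_{n≥1} and f = {f_n}_{n≥1} be two orthonormal bases of H. Then e and f are K(H)-equivalent (i.e., there exists a unitary W with W − I compact and W f_n = e_n for all n) if and only if for every ε > 0 there exists N ∈ ℕ such that for all α = (α_n)_{n≥1} ∈ ℓ²(ℕ) one has ‖∑_{n > N} α_n (e_n − f_n)‖ ≤ ε ‖α‖_{ℓ²}. -/
open Filter Topology
open scoped InnerProductSpace

noncomputable section

variable {H : Type*} [NormedAddCommGroup H] [InnerProductSpace ℂ H] [CompleteSpace H]

/-! With `K = W - 1`, where `W` is the unitary `f n ↦ e n`, the series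
`∑_{n>N} αₙ (eₙ - fₙ)` is `K (Q_N x)` for `x = ∑ αₙ fₙ`, where `Q_N` is the orthogonal
projection onto the closed span of `{fₙ | n > N}`; so the condition says that `‖K Q_N‖ → 0`.
For compact `K` this follows from `‖K Q_N‖² = ‖Q_N K*K Q_N‖ ≤ ‖Q_N K*K‖`: the projections
`Q_N` tend to `0` pointwise and monotonically, hence (Dini) uniformly on the compact closure
of the image of the unit ball under `K*K`. Conversely, if `‖K Q_N‖ → 0` then `K` is a norm
limit of the finite-rank operators `K (1 - Q_N)`. -/

open scoped InnerProduct

section Projections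

variable {𝕜 E F G : Type*} [RCLike 𝕜]
  [NormedAddCommGroup E] [InnerProductSpace 𝕜 E]
  [NormedAddCommGroup G] [NormedSpace 𝕜 G]
  {ι : Type*} {U : ι → Submodule 𝕜 E} [∀ i, (U i).HasOrthogonalProjection]

theorem norm_sub_starProjection_antitone [Preorder ι] (hU : Monotone U) (x : E) :
    Antitone fun i => ‖x - (U i).starProjection x‖ := by
  intro i j hij
  dsimp only
  rw [Submodule.starProjection_minimal]
  exact ciInf_le ⟨0, Set.forall_mem_range.2 fun _ => norm_nonneg _⟩
    (⟨_, hU hij ((U i).starProjection_apply_mem x)⟩ : U j)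

theorem tendsto_norm_starProjection_orthogonal_comp [Preorder ι] (hU : Monotone U)
    (hdense : ⊤ ≤ (⨆ i, U i).topologicalClosure) {T : G →L[𝕜] E}
    (hT : IsCompactOperator T) :
    Tendsto (fun i => ‖(U i)ᗮ.starProjection ∘L T‖) atTop (𝓝 0) := by
  obtain ⟨C, hC, hTC⟩ := hT.image_closedBall_subset_compact 1
  have hunif : TendstoUniformlyOn (fun i x => ‖x - (U i).starProjection x‖) 0 atTop C :=
    Antitone.tendstoUniformlyOn_of_forall_tendsto hC (fun i => by fun_prop)
      (fun x _ => norm_sub_starProjection_antitone hU x) continuousOn_const fun x _ => by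
        simpa using ((Submodule.starProjection_tendsto_self U hU x hdense).const_sub x).norm
  rw [NormedAddGroup.tendsto_nhds_zero]
  intro ε hε
  filter_upwards [Metric.tendstoUniformlyOn_iff.1 hunif (ε / 2) (half_pos hε)] with i hi
  refine lt_of_le_of_lt ?_ (half_lt_self hε)
  rw [norm_norm]
  refine ContinuousLinearMap.opNorm_le_of_unit_norm (half_pos hε).le fun x hx => ?_
  have hxC : T x ∈ C := hTC ⟨x, by simp [hx], rfl⟩
  simpa [Submodule.starProjection_orthogonal'] using (hi _ hxC).le

theorem norm_comp_starProjection_sq_le [CompleteSpace E] [NormedAddCommGroup F]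
    [InnerProductSpace 𝕜 F] [CompleteSpace F] (K : E →L[𝕜] F) (V : Submodule 𝕜 E)
    [V.HasOrthogonalProjection] :
    ‖K ∘L V.starProjection‖ ^ 2 ≤ ‖V.starProjection ∘L (K† ∘L K)‖ := by
  rw [sq, ← ContinuousLinearMap.norm_adjoint_comp_self, ContinuousLinearMap.adjoint_comp,
    (isSelfAdjoint_starProjection V).adjoint_eq]
  calc ‖V.starProjection ∘L K† ∘L K ∘L V.starProjection‖
      = ‖(V.starProjection ∘L (K† ∘L K)) ∘L V.starProjection‖ := rfl
    _ ≤ ‖V.starProjection ∘L (K† ∘L K)‖ * ‖V.starProjection‖ :=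
        ContinuousLinearMap.opNorm_comp_le _ _
    _ ≤ ‖V.starProjection ∘L (K† ∘L K)‖ :=
        mul_le_of_le_one_right (norm_nonneg _) V.starProjection_norm_le

theorem tendsto_norm_comp_starProjection_orthogonal [CompleteSpace E] [NormedAddCommGroup F]
    [InnerProductSpace 𝕜 F] [CompleteSpace F] [Preorder ι] (hU : Monotone U)
    (hdense : ⊤ ≤ (⨆ i, U i).topologicalClosure) {K : E →L[𝕜] F}
    (hK : IsCompactOperator K) :
    Tendsto (fun i => ‖K ∘L (U i)ᗮ.starProjection‖) atTop (𝓝 0) := by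
  have hsq := tendsto_norm_starProjection_orthogonal_comp hU hdense
    (T := K† ∘L K) (by exact hK.clm_comp (K†))
  have hsqrt := (Real.continuous_sqrt.tendsto 0).comp hsq
  rw [Function.comp_def, Real.sqrt_zero] at hsqrt
  refine squeeze_zero (fun _ => norm_nonneg _) (fun i => ?_) hsqrt
  exact Real.le_sqrt_of_sq_le (norm_comp_starProjection_sq_le K _)

theorem isCompactOperator_of_forall_exists_norm_comp_starProjection_orthogonal_le
    [NormedAddCommGroup F] [NormedSpace 𝕜 F] [CompleteSpace F]
    [∀ i, FiniteDimensional 𝕜 (U i)] {K : E →L[𝕜] F}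
    (h : ∀ ε > 0, ∃ i, ‖K ∘L (U i)ᗮ.starProjection‖ ≤ ε) : IsCompactOperator K := by
  refine isClosed_setOfPred_isCompactOperator.closure_subset
    (Metric.mem_closure_iff.2 fun ε hε => ?_)
  obtain ⟨i, hi⟩ := h (ε / 2) (half_pos hε)
  refine ⟨K ∘L (U i).starProjection, ?_, ?_⟩
  · have hP : IsCompactOperator (U i).orthogonalProjectionOnto :=
      isCompactOperator_of_locallyCompactSpace_dom _
    exact hP.clm_comp (K ∘L (U i).subtypeL)
  · rw [Submodule.starProjection_orthogonal, ContinuousLinearMap.comp_sub,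
      ContinuousLinearMap.comp_id] at hi
    rw [dist_eq_norm]
    exact hi.trans_lt (half_lt_self hε)

end Projections

namespace HilbertBasis

variable {𝕜 E F : Type*} [RCLike 𝕜] [NormedAddCommGroup E] [InnerProductSpace 𝕜 E]
  [NormedAddCommGroup F] [NormedSpace 𝕜 F] (b : HilbertBasis ℕ 𝕜 E)

def initialSpan (N : ℕ) : Submodule 𝕜 E :=
  Submodule.span 𝕜 (b '' Set.Iic N)

instance (N : ℕ) : FiniteDimensional 𝕜 (b.initialSpan N) :=
  FiniteDimensional.span_of_finite 𝕜 ((Set.finite_Iic N).image b)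

instance (N : ℕ) : (b.initialSpan N).HasOrthogonalProjection :=
  have : CompleteSpace (b.initialSpan N) := FiniteDimensional.complete 𝕜 _
  inferInstance

theorem initialSpan_mono : Monotone b.initialSpan :=
  fun _ _ h => Submodule.span_mono (Set.image_mono (Set.Iic_subset_Iic.2 h))

theorem top_le_closure_iSup_initialSpan :
    ⊤ ≤ (⨆ N, b.initialSpan N).topologicalClosure := by
  have : (⋃ N, b '' Set.Iic N) = Set.range b := by
    rw [← Set.image_iUnion, Set.iUnion_Iic, Set.image_univ]
  simp only [initialSpan, Submodule.iSup_span, this, b.dense_span, le_refl]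

theorem starProjection_orthogonal_initialSpan_apply (N n : ℕ) :
    (b.initialSpan N)ᗮ.starProjection (b n) = if N < n then b n else 0 := by
  split_ifs with h
  · rw [Submodule.starProjection_eq_self_iff]
    refine (Submodule.isOrtho_span.2 ?_).ge (Submodule.mem_span_singleton_self (b n))
    rintro _ ⟨m, hm, rfl⟩ _ rfl
    exact b.orthonormal.inner_eq_zero (hm.trans_lt h).ne
  · refine Submodule.starProjection_orthogonal_apply_eq_zero ?_
    exact Submodule.subset_span ⟨n, not_lt.1 h, rfl⟩

theorem hasSum_smul_apply_starProjection_orthogonal_initialSpan (K : E →L[𝕜] F) (N : ℕ)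
    (x : E) :
    HasSum (fun n : {n // N < n} => b.repr x n • K (b n))
      (K ((b.initialSpan N)ᗮ.starProjection x)) := by
  have h := (b.hasSum_repr x).mapL (K ∘L (b.initialSpan N)ᗮ.starProjection)
  simp only [ContinuousLinearMap.comp_apply, map_smul,
    starProjection_orthogonal_initialSpan_apply] at h
  have hsupp : Function.support (fun n => b.repr x n • K (if N < n then b n else 0)) ⊆
      {n | N < n} := fun n hn => by
    by_contra hn'
    rw [Set.mem_ofPred_eq] at hn'
    simp [hn'] at hn
  exact ((hasSum_subtype_iff_of_support_subset hsupp).2 h).congr_fun fun n => by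
    simp only [Function.comp_apply, if_pos (show N < (n : ℕ) from n.2)]

theorem forall_hasSum_norm_le_iff_opNorm_le (K : E →L[𝕜] F) (N : ℕ) {ε : ℝ} (hε : 0 ≤ ε) :
    (∀ (α : lp (fun _ : ℕ => 𝕜) 2) (v : F),
        HasSum (fun n : {n // N < n} => α n • K (b n)) v → ‖v‖ ≤ ε * ‖α‖) ↔
      ‖K ∘L (b.initialSpan N)ᗮ.starProjection‖ ≤ ε := by
  constructor
  · intro h
    refine ContinuousLinearMap.opNorm_le_bound _ hε fun x => ?_
    simpa using
      h (b.repr x) _ (b.hasSum_smul_apply_starProjection_orthogonal_initialSpan K N x)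
  · intro h α v hv
    have hx := b.hasSum_smul_apply_starProjection_orthogonal_initialSpan K N (b.repr.symm α)
    rw [LinearIsometryEquiv.apply_symm_apply] at hx
    rw [hv.unique hx, ← b.repr.symm.norm_map α]
    exact ((K ∘L _).le_opNorm _).trans (by gcongr)

end HilbertBasis

/-- Example: `K(H)`-equivalence of orthonormal bases. -/
theorem compact_equivalent_bases (e f : HilbertBasis ℕ ℂ H) :
    (∃ W : H →L[ℂ] H, W ∈ unitary (H →L[ℂ] H) ∧ IsCompactOperator ⇑(W - 1) ∧
      ∀ n, W (f n) = e n) ↔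
      ∀ ε : ℝ, 0 < ε → ∃ N : ℕ, ∀ (α : lp (fun _ : ℕ => ℂ) 2) (v : H),
        HasSum (fun n : {n : ℕ // N < n} => α (n : ℕ) • (e (n : ℕ) - f (n : ℕ))) v →
        ‖v‖ ≤ ε * ‖α‖ := by
  have sub_one_apply : ∀ W : H →L[ℂ] H, (∀ n, W (f n) = e n) →
      ∀ n, (W - 1) (f n) = e n - f n :=
    fun W hW n => by simp [hW]
  constructor
  · rintro ⟨W, -, hcpt, hWf⟩ ε hε
    obtain ⟨N, hN⟩ := ((tendsto_norm_comp_starProjection_orthogonal f.initialSpan_mono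
      f.top_le_closure_iSup_initialSpan hcpt).eventually (ge_mem_nhds hε)).exists
    refine ⟨N, ?_⟩
    simpa only [sub_one_apply W hWf] using
      (f.forall_hasSum_norm_le_iff_opNorm_le (W - 1) N hε.le).2 hN
  · intro h
    let W : H ≃ₗᵢ[ℂ] H := f.repr.trans e.repr.symm
    have hWf : ∀ n, (W : H →L[ℂ] H) (f n) = e n := by
      classical simp [W, f.repr_self, e.repr_symm_single]
    refine ⟨W, (Unitary.linearIsometryEquiv.symm W).2, ?_, hWf⟩
    refine isCompactOperator_of_forall_exists_norm_comp_starProjection_orthogonal_le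
      (U := f.initialSpan) fun ε hε => ?_
    obtain ⟨N, hN⟩ := h ε hε
    refine ⟨N, (f.forall_hasSum_norm_le_iff_opNorm_le _ N hε.le).1 ?_⟩
    simpa only [sub_one_apply _ hWf] using hN

end
end

section
/- The arithmetic mean closure of the ideal F(H) of finite-rank operators is the trace class: F(H)^{-am} = S_1(H). -/
open Filter Topology
open scoped InnerProductSpace

noncomputable section

variable {H : Type*} [NormedAddCommGroup H] [InnerProductSpace ℂ H] [CompleteSpace H]

lemma sNum_bddBelow (T : H →L[ℂ] H) (n : ℕ) :
    BddBelow {c : ℝ | ∃ F : H →L[ℂ] H, IsFiniteRankOp F ∧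
      Module.finrank ℂ (LinearMap.range (F : H →ₗ[ℂ] H)) ≤ n ∧ c = ‖T - F‖} :=
  ⟨0, fun c hc => by obtain ⟨F, -, -, rfl⟩ := hc; exact norm_nonneg _⟩

lemma sNum_nonneg (T : H →L[ℂ] H) (n : ℕ) : 0 ≤ sNum T n := by
  apply Real.sInf_nonneg
  rintro c ⟨F, -, -, rfl⟩
  exact norm_nonneg _

lemma sNum_le (T F : H →L[ℂ] H) (n : ℕ) (hF : IsFiniteRankOp F)
    (hr : Module.finrank ℂ (LinearMap.range (F : H →ₗ[ℂ] H)) ≤ n) :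
    sNum T n ≤ ‖T - F‖ :=
  csInf_le (sNum_bddBelow T n) ⟨F, hF, hr, rfl⟩

lemma sNum_eq_zero (B : H →L[ℂ] H) (hB : IsFiniteRankOp B) (k : ℕ)
    (hk : Module.finrank ℂ (LinearMap.range (B : H →ₗ[ℂ] H)) ≤ k) :
    sNum B k = 0 := by
  refine le_antisymm ?_ (sNum_nonneg B k)
  have := sNum_le B B k hB hk
  simpa using this

/-- the arithmetic mean closure of the finite rank operators is the
trace class, i.e. the compact operators with summable singular values. -/
theorem amClosure_finiteRank_eq_traceClass (e : HilbertBasis ℕ ℂ H) :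
    amClosure {T : H →L[ℂ] H | IsFiniteRankOp T} =
      {T : H →L[ℂ] H | IsCompactOperator ⇑T ∧ Summable (sNum T)} := by
  ext A
  simp only [amClosure, Set.mem_setOf_eq]
  constructor
  · rintro ⟨hc, B, hB, M, hM, hbound⟩
    refine ⟨hc, ?_⟩
    haveI : FiniteDimensional ℂ (LinearMap.range (B : H →ₗ[ℂ] H)) := hB
    set r := Module.finrank ℂ (LinearMap.range (B : H →ₗ[ℂ] H)) with hr
    have hz : ∀ k, r ≤ k → sNum B k = 0 := fun k hk => sNum_eq_zero B hB k hk
    set C := ∑ k ∈ Finset.range r, sNum B k with hC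
    have hC0 : 0 ≤ C := Finset.sum_nonneg fun k _ => sNum_nonneg B k
    have hBsum : ∀ m : ℕ, ∑ k ∈ Finset.range m, sNum B k ≤ C := by
      intro m
      have h1 : ∑ k ∈ Finset.range m, sNum B k ≤
          ∑ k ∈ Finset.range (max m r), sNum B k := by
        apply Finset.sum_le_sum_of_subset_of_nonneg
        · exact Finset.range_subset_range.2 (le_max_left _ _)
        · exact fun k _ _ => sNum_nonneg B k
      have h2 : ∑ k ∈ Finset.range (max m r), sNum B k = C := by
        rw [hC]
        refine (Finset.sum_subset (Finset.range_subset_range.2 (le_max_right _ _)) ?_).symm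
        intro k hk hk'
        exact hz k (le_of_not_gt (fun h => hk' (Finset.mem_range.2 h)))
      linarith
    apply summable_of_sum_range_le (c := M * C) (fun n => sNum_nonneg A n)
    intro n
    cases n with
    | zero => simpa using mul_nonneg hM.le hC0
    | succ m =>
      calc ∑ k ∈ Finset.range (m + 1), sNum A k
          ≤ M * ∑ k ∈ Finset.range (m + 1), sNum B k := hbound m
        _ ≤ M * C := by
            have := hBsum (m + 1)
            nlinarith
  · rintro ⟨hc, hs⟩
    set B : H →L[ℂ] H := (innerSL ℂ (e 0)).smulRight (e 0) with hBdef
    have hrange : LinearMap.range (B : H →ₗ[ℂ] H) ≤ Submodule.span ℂ {e 0} := by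
      rintro y ⟨x, rfl⟩
      exact Submodule.smul_mem _ _ (Submodule.mem_span_singleton_self _)
    have hBfin : IsFiniteRankOp B :=
      Submodule.finiteDimensional_of_le hrange
    have he0 : ‖e 0‖ = 1 := e.orthonormal.1 0
    have hBe : B (e 0) = e 0 := by
      simp only [hBdef, ContinuousLinearMap.smulRight_apply, innerSL_apply_apply]
      rw [inner_self_eq_norm_sq_to_K, he0]
      norm_num
    have hBnorm : 1 ≤ ‖B‖ := by
      have h := B.unit_le_opNorm (e 0) (le_of_eq he0)
      rwa [hBe, he0] at h
    have hzero_fr : IsFiniteRankOp (0 : H →L[ℂ] H) := by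
      unfold IsFiniteRankOp
      rw [show ((0 : H →L[ℂ] H) : H →ₗ[ℂ] H) = 0 from rfl, LinearMap.range_zero]
      infer_instance
    have hB0 : 1 ≤ sNum B 0 := by
      refine le_csInf ⟨‖B - 0‖, 0, hzero_fr, ?_, rfl⟩ ?_
      · rw [show ((0 : H →L[ℂ] H) : H →ₗ[ℂ] H) = 0 from rfl, LinearMap.range_zero]
        simp
      · rintro c ⟨F, hF, hFr, rfl⟩
        haveI : FiniteDimensional ℂ (LinearMap.range (F : H →ₗ[ℂ] H)) := hF
        have hF0 : F = 0 := by
          have h1 : LinearMap.range (F : H →ₗ[ℂ] H) = ⊥ :=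
            Submodule.finrank_eq_zero.mp (Nat.le_zero.mp hFr)
          have h2 : (F : H →ₗ[ℂ] H) = 0 := LinearMap.range_eq_bot.mp h1
          ext x
          exact LinearMap.congr_fun h2 x
        rw [hF0, sub_zero]
        exact hBnorm
    set S := ∑' n, sNum A n with hS
    have hS0 : 0 ≤ S := tsum_nonneg fun n => sNum_nonneg A n
    refine ⟨hc, B, hBfin, S + 1, by linarith, ?_⟩
    intro n
    have hA : ∑ k ∈ Finset.range (n + 1), sNum A k ≤ S :=
      Summable.sum_le_tsum _ (fun k _ => sNum_nonneg A k) hs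
    have hBs : 1 ≤ ∑ k ∈ Finset.range (n + 1), sNum B k := by
      calc (1 : ℝ) ≤ sNum B 0 := hB0
        _ ≤ ∑ k ∈ Finset.range (n + 1), sNum B k := by
            apply Finset.single_le_sum (fun k _ => sNum_nonneg B k)
            simp
    nlinarith

end
end

section
/- Let F(H) be the ideal of finite-rank operators on H. There exists a diagonalizable operator A ∈ B(H) with infinite point spectrum and spectral projections {P_n}_{n≥1} such that A is U_{F(H)}(H)-diagonalizable, yet there is no sequence {E_n}_{n≥1} of diagonal projections with ∑_{n≥1} (I − E_n) P_n ∈ F(H) and ∑_{n≥1} E_n (I − P_n) ∈ F(H) (series taken in the weak operator topology). In particular, the necessity assertion of the characterization of restricted diagonalization fails for operator ideals that are not arithmetic mean closed. -/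
open Filter Topology
open scoped InnerProductSpace

noncomputable section

variable {H : Type*} [NormedAddCommGroup H] [InnerProductSpace ℂ H] [CompleteSpace H]

set_option linter.unusedSectionVars false
set_option maxHeartbeats 1000000

namespace FRCEx

/-- coefficients of the vector `q`. -/
def al (n : ℕ) : ℝ := Real.sqrt 3 * (1 / 2) ^ (n + 1)

lemma al_pos (n : ℕ) : 0 < al n := by
  have h3 : (0:ℝ) < Real.sqrt 3 := Real.sqrt_pos.2 (by norm_num)
  exact mul_pos h3 (by positivity)

lemma al_sq (n : ℕ) : al n ^ 2 = (3 / 4) * (1 / 4) ^ n := by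
  have h : Real.sqrt 3 ^ 2 = 3 := Real.sq_sqrt (by norm_num)
  have : al n ^ 2 = Real.sqrt 3 ^ 2 * (((1:ℝ)/2) ^ (n+1)) ^ 2 := by
    rw [al]; ring
  rw [this, h, ← pow_mul]
  have : (1/2 : ℝ) ^ ((n+1)*2) = ((1/4:ℝ)) ^ (n+1) := by
    rw [mul_comm, pow_mul]; norm_num
  rw [this, pow_succ]; ring

lemma al_sq_hasSum : HasSum (fun n => al n ^ 2) 1 := by
  have h := hasSum_geometric_of_lt_one (by norm_num : (0:ℝ) ≤ 1/4) (by norm_num)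
  have h2 := h.mul_left (3/4 : ℝ)
  have : (3/4 : ℝ) * (1 - 1/4)⁻¹ = 1 := by norm_num
  rw [this] at h2
  simpa only [al_sq] using h2

lemma al_summable : Summable al := by
  have := (summable_geometric_of_lt_one (by norm_num : (0:ℝ) ≤ 1/2) (by norm_num)).mul_left
    (Real.sqrt 3 * (1/2))
  refine this.congr fun n => ?_
  rw [al, pow_succ]; ring

lemma al_le_al_zero (n : ℕ) : al n ≤ al 0 := by
  have h3 : (0:ℝ) ≤ Real.sqrt 3 := Real.sqrt_nonneg 3
  have : ((1:ℝ)/2) ^ (n+1) ≤ (1/2) ^ (0+1) :=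
    pow_le_pow_of_le_one (by norm_num) (by norm_num) (by omega)
  exact mul_le_mul_of_nonneg_left this h3

lemma al_mul_le (n k : ℕ) (h : n ≠ k) : al n * al k ≤ 3 / 8 := by
  have h3 : Real.sqrt 3 ^ 2 = 3 := Real.sq_sqrt (by norm_num)
  have key : ∀ a b : ℕ, a < b → al a * al b ≤ 3/8 := by
    intro a b hab
    have : al a * al b = Real.sqrt 3 ^ 2 * ((1/2:ℝ) ^ (a+1) * (1/2) ^ (b+1)) := by
      rw [al, al]; ring
    rw [this, h3, ← pow_add]
    have h1 : (1/2:ℝ) ^ (a + 1 + (b + 1)) ≤ (1/2) ^ 3 := by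
      apply pow_le_pow_of_le_one (by norm_num) (by norm_num); omega
    nlinarith [pow_nonneg (by norm_num : (0:ℝ) ≤ 1/2) (a + 1 + (b+1))]
  rcases lt_or_gt_of_ne h with h' | h'
  · exact key n k h'
  · rw [mul_comm]; exact key k n h'

variable (e : HilbertBasis ℕ ℂ H)

/-- the unit vector `q`. -/
def qv : H := ∑' n, ((al n : ℂ)) • e n

lemma qv_hasSum : HasSum (fun n => ((al n : ℂ)) • e n) (qv e) := by
  have hs : Summable (fun n => ((al n : ℂ)) • e n) := by
    apply Summable.of_norm
    refine al_summable.congr fun n => ?_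
    rw [norm_smul]
    simp [(al_pos n).le, abs_of_pos (al_pos n), e.orthonormal.1 n]
  simpa [qv] using hs.hasSum

lemma inner_e_qv (k : ℕ) : ⟪e k, qv e⟫_ℂ = (al k : ℂ) := by
  have h := (qv_hasSum e).mapL (innerSL ℂ (e k))
  have h2 : HasSum (fun n => ((al n : ℂ)) * ⟪e k, e n⟫_ℂ) ⟪e k, qv e⟫_ℂ := by
    simpa [inner_smul_right] using h
  have h3 : HasSum (fun n => ((al n : ℂ)) * ⟪e k, e n⟫_ℂ)
      ((al k : ℂ) * ⟪e k, e k⟫_ℂ) := by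
    apply hasSum_single k
    intro n hn
    have := e.orthonormal
    rw [orthonormal_iff_ite] at this
    rw [this k n]
    simp [(Ne.symm hn : ¬ (k = n))]
  have h4 := h2.unique h3
  rw [h4]
  have ho := e.orthonormal
  rw [orthonormal_iff_ite] at ho
  rw [ho k k]
  simp

lemma inner_qv_e (k : ℕ) : ⟪qv e, e k⟫_ℂ = (al k : ℂ) := by
  rw [← inner_conj_symm, inner_e_qv]; simp

lemma inner_qv_qv : ⟪qv e, qv e⟫_ℂ = 1 := by
  have h := (qv_hasSum e).mapL (innerSL ℂ (qv e))
  have h2 : HasSum (fun n => ((al n ^ 2 : ℝ) : ℂ)) ⟪qv e, qv e⟫_ℂ := by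
    refine h.congr_fun fun n => ?_
    simp [inner_smul_right, inner_qv_e, pow_two]
  have h3 : HasSum (fun n => ((al n ^ 2 : ℝ) : ℂ)) ((1:ℝ):ℂ) := by
    exact_mod_cast Complex.hasSum_ofReal.2 al_sq_hasSum
  have := h2.unique h3
  rw [this]; norm_num


/-- rank-one projection onto `q`. -/
def Pq : H →L[ℂ] H := (innerSL ℂ (qv e)).smulRight (qv e)

lemma Pq_apply (x : H) : Pq e x = ⟪qv e, x⟫_ℂ • qv e := rfl

/-- the symmetry `W = 1 - 2 q⊗q`. -/
def Wu : H →L[ℂ] H := 1 - (2:ℂ) • Pq e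

lemma Wu_apply (x : H) : Wu e x = x - (2 * ⟪qv e, x⟫_ℂ) • qv e := by
  simp [Wu, Pq_apply, smul_smul]

lemma star_Pq : star (Pq e) = Pq e := by
  rw [ContinuousLinearMap.star_eq_adjoint]
  symm
  refine (ContinuousLinearMap.eq_adjoint_iff _ _).2 fun x y => ?_
  rw [Pq_apply, Pq_apply, inner_smul_left, inner_smul_right, ← inner_conj_symm (qv e) x,
    starRingEnd_self_apply]
  ring

lemma star_Wu : star (Wu e) = Wu e := by
  rw [Wu, star_sub, star_smul, star_one, star_Pq]
  norm_num

lemma Wu_mul_Wu : Wu e * Wu e = 1 := by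
  ext x
  have h1 : ⟪qv e, Wu e x⟫_ℂ = - ⟪qv e, x⟫_ℂ := by
    rw [Wu_apply, inner_sub_right, inner_smul_right, inner_qv_qv]
    ring
  simp only [ContinuousLinearMap.mul_apply, ContinuousLinearMap.one_apply]
  rw [Wu_apply, h1, Wu_apply, mul_neg, neg_smul, sub_neg_eq_add, sub_add_cancel]

lemma Wu_unitary : Wu e ∈ unitary (H →L[ℂ] H) :=
  Unitary.mem_iff.2 ⟨by rw [star_Wu, Wu_mul_Wu], by rw [star_Wu, Wu_mul_Wu]⟩

lemma Wu_apply_e (m : ℕ) : Wu e (e m) = e m - ((2 * al m : ℝ) : ℂ) • qv e := by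
  rw [Wu_apply, inner_qv_e]
  push_cast
  ring_nf

/-- rank one projection onto `e n`. -/
def Qd (n : ℕ) : H →L[ℂ] H := (innerSL ℂ (e n)).smulRight (e n)

lemma Qd_apply (n : ℕ) (x : H) : Qd e n x = ⟪e n, x⟫_ℂ • e n := rfl

lemma inner_e_e (m n : ℕ) : ⟪e m, e n⟫_ℂ = if m = n then 1 else 0 := by
  have ho := e.orthonormal
  rw [orthonormal_iff_ite] at ho
  exact ho m n

lemma Qd_apply_e (n m : ℕ) : Qd e n (e m) = if n = m then e m else 0 := by
  rw [Qd_apply, inner_e_e]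
  by_cases h : n = m <;> simp [h]

lemma star_Qd (n : ℕ) : star (Qd e n) = Qd e n := by
  rw [ContinuousLinearMap.star_eq_adjoint]
  symm
  refine (ContinuousLinearMap.eq_adjoint_iff _ _).2 fun x y => ?_
  rw [Qd_apply, Qd_apply, inner_smul_left, inner_smul_right, ← inner_conj_symm (e n) x,
    starRingEnd_self_apply]
  ring

lemma Qd_mul_Qd_self (n : ℕ) : Qd e n * Qd e n = Qd e n := by
  ext x
  simp only [ContinuousLinearMap.mul_apply]
  rw [Qd_apply, Qd_apply, inner_smul_right, inner_e_e]
  simp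

lemma Qd_mul_Qd_ne {m n : ℕ} (h : m ≠ n) : Qd e m * Qd e n = 0 := by
  ext x
  simp only [ContinuousLinearMap.mul_apply, ContinuousLinearMap.zero_apply]
  rw [Qd_apply, Qd_apply, inner_smul_right, inner_e_e]
  simp [h]

/-- eigenvalue sequence -/
def lamR (n : ℕ) : ℝ := (1/2 : ℝ) ^ n

def lamC (n : ℕ) : ℂ := ((lamR n : ℝ) : ℂ)

lemma Qd_norm_le (n : ℕ) : ‖Qd e n‖ ≤ 1 := by
  rw [Qd, ContinuousLinearMap.norm_smulRight_apply, innerSL_apply_norm, e.orthonormal.1 n]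
  simp [e.orthonormal.1 n]

lemma D_summable : Summable (fun n => lamC n • Qd e n) := by
  apply Summable.of_norm
  have hg : Summable (fun n : ℕ => (1/2:ℝ)^n) :=
    summable_geometric_of_lt_one (by norm_num) (by norm_num)
  apply Summable.of_nonneg_of_le (fun n => norm_nonneg _) _ hg
  intro n
  rw [norm_smul]
  have h1 : ‖lamC n‖ = (1/2:ℝ)^n := by
    rw [lamC, Complex.norm_real, lamR, Real.norm_eq_abs, abs_of_pos (by positivity)]
  rw [h1]
  calc (1/2:ℝ)^n * ‖Qd e n‖ ≤ (1/2:ℝ)^n * 1 :=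
        mul_le_mul_of_nonneg_left (Qd_norm_le e n) (by positivity)
    _ = (1/2:ℝ)^n := by ring

/-- the diagonal operator -/
def Dop : H →L[ℂ] H := ∑' n, lamC n • Qd e n

lemma Dop_hasSum (x : H) : HasSum (fun n => lamC n • Qd e n x) (Dop e x) := by
  have h := ((D_summable e).hasSum).mapL (ContinuousLinearMap.apply ℂ H x)
  simpa [Dop] using h

lemma Dop_apply_e (m : ℕ) : Dop e (e m) = lamC m • e m := by
  refine ((Dop_hasSum e (e m)).unique ?_)
  have h : HasSum (fun n => lamC n • Qd e n (e m)) (lamC m • Qd e m (e m)) :=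
    hasSum_single m fun n hn => by rw [Qd_apply_e, if_neg hn, smul_zero]
  rw [Qd_apply_e, if_pos rfl] at h
  exact h

/-- the operator `A` and its spectral projections -/
def Aop : H →L[ℂ] H := Wu e * Dop e * Wu e

def Pj (n : ℕ) : H →L[ℂ] H := Wu e * Qd e n * Wu e


lemma inner_selfadj {T : H →L[ℂ] H} (hT : star T = T) (x y : H) :
    ⟪T x, y⟫_ℂ = ⟪x, T y⟫_ℂ := by
  conv_lhs => rw [← hT]
  rw [ContinuousLinearMap.star_eq_adjoint, ContinuousLinearMap.adjoint_inner_left]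

lemma Wu_Wu_cancel (z : H →L[ℂ] H) : Wu e * (Wu e * z) = z := by
  rw [← mul_assoc, Wu_mul_Wu, one_mul]

lemma Wu_Wu_apply (x : H) : Wu e (Wu e x) = x := by
  have := ContinuousLinearMap.ext_iff.1 (Wu_mul_Wu e) x
  simpa [ContinuousLinearMap.mul_apply] using this

/-- the eigenvectors `f n = W (e n)` -/
def fv (n : ℕ) : H := Wu e (e n)

lemma fv_eq (n : ℕ) : fv e n = e n - ((2 * al n : ℝ) : ℂ) • qv e := Wu_apply_e e n

lemma Pj_apply (n : ℕ) (x : H) : Pj e n x = ⟪fv e n, x⟫_ℂ • fv e n := by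
  rw [Pj]
  simp only [ContinuousLinearMap.mul_apply]
  rw [Qd_apply, map_smul]
  congr 1
  rw [fv, inner_selfadj (star_Wu e)]

lemma star_Pj (n : ℕ) : star (Pj e n) = Pj e n := by
  rw [Pj, star_mul, star_mul, star_Wu, star_Qd, mul_assoc]

lemma Pj_mul_Pj_self (n : ℕ) : Pj e n * Pj e n = Pj e n := by
  rw [Pj]
  simp only [mul_assoc]
  rw [Wu_Wu_cancel, ← mul_assoc (Qd e n), Qd_mul_Qd_self]

lemma Pj_mul_Pj_ne {m n : ℕ} (h : m ≠ n) : Pj e m * Pj e n = 0 := by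
  rw [Pj, Pj]
  simp only [mul_assoc]
  rw [Wu_Wu_cancel, ← mul_assoc (Qd e m), Qd_mul_Qd_ne e h]
  simp

lemma fv_ne_zero (n : ℕ) : fv e n ≠ 0 := by
  intro h
  have h2 : e n = 0 := by
    have := Wu_Wu_apply e (e n)
    rw [← fv, h, map_zero] at this
    exact this.symm
  have := e.orthonormal.1 n
  rw [h2] at this
  simp at this

lemma Pj_ne_zero (n : ℕ) : Pj e n ≠ 0 := by
  intro h
  have h1 : Pj e n (fv e n) = 0 := by rw [h]; rfl
  rw [Pj_apply] at h1
  have h2 : ⟪fv e n, fv e n⟫_ℂ ≠ 0 := inner_self_ne_zero.2 (fv_ne_zero e n)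
  rcases smul_eq_zero.1 h1 with h | h
  · exact h2 h
  · exact fv_ne_zero e n h

lemma Pj_hasSum (x : H) : HasSum (fun n => Pj e n x) x := by
  have h0 : HasSum (fun n => (⟪e n, Wu e x⟫_ℂ) • e n) (Wu e x) := by
    have := e.hasSum_repr (Wu e x)
    refine this.congr_fun fun n => ?_
    rw [e.repr_apply_apply]
  have h1 := h0.mapL (Wu e)
  rw [Wu_Wu_apply] at h1
  refine h1.congr_fun fun n => ?_
  rw [Pj]
  simp only [ContinuousLinearMap.mul_apply, Qd_apply, map_smul]

lemma lamC_injective : Function.Injective lamC := by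
  have hs : StrictAnti lamR := fun a b hab =>
    pow_lt_pow_right_of_lt_one₀ (by norm_num) (by norm_num) hab
  intro a b hab
  apply hs.injective
  rwa [lamC, lamC, Complex.ofReal_inj] at hab

lemma Aop_spectral : SpectralDataOf (Aop e) lamC (Pj e) := by
  refine ⟨⟨fun n => ⟨?_, Pj_mul_Pj_self e n⟩, fun m n h => Pj_mul_Pj_ne e h, Pj_hasSum e⟩,
    Pj_ne_zero e, lamC_injective, ?_⟩
  · exact star_Pj e n  -- IsSelfAdjoint
  · intro x
    have h := (Dop_hasSum e (Wu e x)).mapL (Wu e)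
    have hA : Aop e x = Wu e (Dop e (Wu e x)) := by
      rw [Aop]; simp [ContinuousLinearMap.mul_apply]
    rw [← hA] at h
    refine h.congr_fun fun n => ?_
    rw [map_smul, Pj]
    simp only [ContinuousLinearMap.mul_apply]

lemma Wu_sub_one_finiteRank : IsFiniteRankOp (Wu e - 1) := by
  rw [IsFiniteRankOp]
  have hle : LinearMap.range ((Wu e - 1 : H →L[ℂ] H) : H →ₗ[ℂ] H) ≤ (ℂ ∙ qv e) := by
    rintro x ⟨y, rfl⟩
    have h : ((Wu e - 1 : H →L[ℂ] H) : H →ₗ[ℂ] H) y = (-(2 * ⟪qv e, y⟫_ℂ)) • qv e := by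
      simp only [ContinuousLinearMap.coe_coe, ContinuousLinearMap.sub_apply,
        ContinuousLinearMap.one_apply, Wu_apply, neg_smul]
      abel
    rw [h]
    exact Submodule.smul_mem _ _ (Submodule.mem_span_singleton_self _)
  exact Submodule.finiteDimensional_of_le hle

lemma e_ne_zero (k : ℕ) : e k ≠ 0 := by
  intro h
  have := e.orthonormal.1 k
  rw [h] at this
  simp at this

lemma eq_zero_of_forall_inner (x : H) (h : ∀ j, ⟪e j, x⟫_ℂ = 0) : x = 0 := by
  have h1 := e.hasSum_repr x
  have h2 : (fun i => e.repr x i • e i) = fun _ => (0 : H) :=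
    funext fun j => by rw [e.repr_apply_apply, h j, zero_smul]
  rw [h2] at h1
  exact h1.unique hasSum_zero

lemma sqrt3_le_two : Real.sqrt 3 ≤ 2 := by
  rw [show (2:ℝ) = Real.sqrt 4 by
    rw [show (4:ℝ) = 2^2 by norm_num, Real.sqrt_sq (by norm_num : (0:ℝ) ≤ 2)]]
  exact Real.sqrt_le_sqrt (by norm_num)

lemma al_anti {m n : ℕ} (h : m ≤ n) : al n ≤ al m := by
  have h3 : (0:ℝ) ≤ Real.sqrt 3 := Real.sqrt_nonneg 3
  have : ((1:ℝ)/2) ^ (n+1) ≤ (1/2) ^ (m+1) :=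
    pow_le_pow_of_le_one (by norm_num) (by norm_num) (by omega)
  exact mul_le_mul_of_nonneg_left this h3

lemma norm_qv : ‖qv e‖ = 1 := by
  have h : ‖qv e‖ ^ 2 = 1 := by
    rw [← inner_self_eq_norm_sq (𝕜 := ℂ), inner_qv_qv]
    simp
  nlinarith [norm_nonneg (qv e), h]

lemma norm_fv_le (m : ℕ) : ‖fv e m‖ ≤ 3 := by
  rw [fv_eq]
  refine (norm_sub_le _ _).trans ?_
  rw [norm_smul, norm_qv, e.orthonormal.1 m]
  have h1 : ‖((2 * al m : ℝ) : ℂ)‖ = 2 * al m := by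
    rw [Complex.norm_real, Real.norm_eq_abs, abs_of_pos (by have := al_pos m; linarith)]
  rw [h1]
  have h2 : al m ≤ 1 := by
    have h0 : al 0 ≤ 1 := by
      rw [al]
      have h3 : ((1:ℝ)/2)^(0+1) = 1/2 := by norm_num
      rw [h3]
      linarith [sqrt3_le_two]
    linarith [al_anti (Nat.zero_le m)]
  linarith

lemma inner_e_tendsto (x : H) : Tendsto (fun m => ⟪x, e m⟫_ℂ) atTop (𝓝 0) := by
  have hsum : Summable (fun m => ‖e.repr x m‖ ^ (2 : ENNReal).toReal) :=
    (lp.memℓp (e.repr x)).summable (by norm_num)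
  have h0 : Tendsto (fun m => ‖e.repr x m‖ ^ (2 : ENNReal).toReal) atTop (𝓝 0) :=
    hsum.tendsto_atTop_zero
  have h1 : Tendsto (fun m => ‖e.repr x m‖) atTop (𝓝 0) := by
    have hc : Tendsto Real.sqrt (𝓝 0) (𝓝 0) := by
      simpa using (Real.continuous_sqrt.tendsto 0)
    have h2 := hc.comp h0
    refine h2.congr fun m => ?_
    have : (2 : ENNReal).toReal = ((2:ℕ):ℝ) := by norm_num
    rw [Function.comp_apply, this, Real.rpow_natCast, Real.sqrt_sq (norm_nonneg _)]
  apply squeeze_zero_norm _ h1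
  intro m
  rw [norm_inner_symm, ← e.repr_apply_apply]


lemma finiteRank_inner_decay (S : H →L[ℂ] H) (hS : IsFiniteRankOp S) :
    Tendsto (fun m => ⟪S (fv e m), e m⟫_ℂ) atTop (𝓝 0) := by
  haveI : FiniteDimensional ℂ (LinearMap.range (S : H →ₗ[ℂ] H)) := hS
  set V := LinearMap.range (S : H →ₗ[ℂ] H) with hV
  let b := stdOrthonormalBasis ℂ V
  have hrep : ∀ m, ⟪S (fv e m), e m⟫_ℂ =
      ∑ i, (starRingEnd ℂ) ⟪(b i : H), S (fv e m)⟫_ℂ * ⟪(b i : H), e m⟫_ℂ := by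
    intro m
    have hmem : S (fv e m) ∈ V := LinearMap.mem_range_self _ _
    have hv := b.sum_repr' (⟨S (fv e m), hmem⟩ : V)
    have hv' : S (fv e m) = ∑ i, ⟪(b i : H), S (fv e m)⟫_ℂ • (b i : H) := by
      have h10 := congrArg (Subtype.val) hv
      push_cast at h10
      simp only [Submodule.coe_inner] at h10
      exact h10.symm
    conv_lhs => rw [hv']
    rw [sum_inner]
    exact Finset.sum_congr rfl fun i _ => by rw [inner_smul_left]
  have hterms : ∀ i : Fin (Module.finrank ℂ V), Tendsto
      (fun m => (starRingEnd ℂ) ⟪(b i : H), S (fv e m)⟫_ℂ * ⟪(b i : H), e m⟫_ℂ)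
      atTop (𝓝 0) := by
    intro i
    have ht : Tendsto (fun m => (‖S‖ * 3) * ‖⟪((b i : H)), e m⟫_ℂ‖) atTop (𝓝 0) := by
      have h7 := (inner_e_tendsto e ((b i : H))).norm
      simp only [norm_zero] at h7
      have h8 := h7.const_mul (‖S‖ * 3)
      simpa using h8
    refine squeeze_zero_norm (fun m => ?_) ht
    · 
      rw [norm_mul, RCLike.norm_conj]
      have hb : ‖(b i : H)‖ = 1 := b.orthonormal.1 i
      have h3 : ‖⟪(b i : H), S (fv e m)⟫_ℂ‖ ≤ ‖S (fv e m)‖ := by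
        have := norm_inner_le_norm (𝕜 := ℂ) (b i : H) (S (fv e m))
        rwa [hb, one_mul] at this
      have h4 : ‖S (fv e m)‖ ≤ ‖S‖ * 3 := by
        calc ‖S (fv e m)‖ ≤ ‖S‖ * ‖fv e m‖ := S.le_opNorm _
          _ ≤ ‖S‖ * 3 := by
            have := norm_fv_le e m
            have h5 := norm_nonneg S
            nlinarith
      have h6 := norm_nonneg (⟪(b i : H), e m⟫_ℂ)
      nlinarith
  have hsumT := tendsto_finset_sum (Finset.univ : Finset (Fin (Module.finrank ℂ V)))
    (fun i _ => hterms i)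
  have h9 : Tendsto (fun m => ∑ i, (starRingEnd ℂ) ⟪(b i : H), S (fv e m)⟫_ℂ *
      ⟪(b i : H), e m⟫_ℂ) atTop (𝓝 0) := by simpa using hsumT
  exact h9.congr fun m => (hrep m).symm

lemma inner_fv_e (n k : ℕ) :
    ⟪fv e n, e k⟫_ℂ = (((if n = k then (1:ℝ) else 0) - 2 * al n * al k : ℝ) : ℂ) := by
  rw [fv_eq, inner_sub_left, inner_smul_left, inner_qv_e, inner_e_e, Complex.conj_ofReal]
  split_ifs <;> push_cast <;> ring

lemma inner_fv_fv (n m : ℕ) : ⟪fv e n, fv e m⟫_ℂ = if n = m then 1 else 0 := by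
  rw [fv, fv, inner_selfadj (star_Wu e), Wu_Wu_apply, inner_e_e]

/-- an auxiliary strictly increasing index sequence -/
def seqIdx (N₀ : ℕ) (F : ℕ → ℕ) : ℕ → ℕ
  | 0 => N₀
  | j+1 => max (seqIdx N₀ F j + 1) (F (seqIdx N₀ F j))

lemma seqIdx_strictMono (N₀ : ℕ) (F : ℕ → ℕ) : StrictMono (seqIdx N₀ F) :=
  strictMono_nat_of_lt_succ fun j =>
    lt_of_lt_of_le (Nat.lt_succ_self _) (le_max_left _ _)

lemma seqIdx_ge (N₀ : ℕ) (F : ℕ → ℕ) (j : ℕ) : N₀ ≤ seqIdx N₀ F j := by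
  induction j with
  | zero => exact le_refl _
  | succ j ih => exact le_trans ih (le_trans (Nat.le_succ _) (le_max_left _ _))

lemma seqIdx_F_le (N₀ : ℕ) (F : ℕ → ℕ) {i j : ℕ} (h : i < j) :
    F (seqIdx N₀ F i) ≤ seqIdx N₀ F j :=
  le_trans (le_max_right _ _) ((seqIdx_strictMono N₀ F).monotone (Nat.succ_le_of_lt h))

lemma li_of_triangular {ι : Type*} [LinearOrder ι] (v w : ι → H)
    (hlt : ∀ i j, i < j → ⟪w i, v j⟫_ℂ = 0) (hne : ∀ i, ⟪w i, v i⟫_ℂ ≠ 0) :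
    LinearIndependent ℂ v := by
  rw [linearIndependent_iff']
  intro s
  induction s using Finset.strongInductionOn with
  | _ s ih =>
    intro g hsum i hi
    have hna : s.Nonempty := ⟨i, hi⟩
    set i₀ := s.min' hna with hi₀
    have hkey : g i₀ * ⟪w i₀, v i₀⟫_ℂ = 0 := by
      have h1 : ⟪w i₀, ∑ j ∈ s, g j • v j⟫_ℂ = 0 := by rw [hsum, inner_zero_right]
      rw [inner_sum] at h1
      have h2 : ∀ j ∈ s, j ≠ i₀ → ⟪w i₀, g j • v j⟫_ℂ = 0 := by
        intro j hj hij
        rw [inner_smul_right,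
          hlt i₀ j (lt_of_le_of_ne (s.min'_le j hj) (Ne.symm hij)), mul_zero]
      rw [Finset.sum_eq_single i₀ h2 (fun h => absurd (s.min'_mem hna) h)] at h1
      rwa [inner_smul_right] at h1
    have h0 : g i₀ = 0 := by
      rcases mul_eq_zero.1 hkey with h | h
      · exact h
      · exact absurd h (hne i₀)
    by_cases hii : i = i₀
    · rw [hii]; exact h0
    · refine ih (s.erase i₀) (Finset.erase_ssubset (s.min'_mem hna)) g ?_ i
        (Finset.mem_erase.2 ⟨hii, hi⟩)
      rw [Finset.sum_erase_eq_sub (s.min'_mem hna), hsum, h0, zero_smul, sub_zero]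

lemma no_diag_seq :
    ¬ ∃ E : ℕ → H →L[ℂ] H, (∀ n, IsDiagonalProjection e (E n)) ∧
      (∃ S₁ ∈ {T : H →L[ℂ] H | IsFiniteRankOp T},
        WOTSum (fun n => (1 - E n) * Pj e n) S₁) ∧
      (∃ S₂ ∈ {T : H →L[ℂ] H | IsFiniteRankOp T},
        WOTSum (fun n => E n * (1 - Pj e n)) S₂) := by
  rintro ⟨E, hE, ⟨S₁, hS₁, hW₁⟩, ⟨S₂, -, hW₂⟩⟩
  classical
  set c : ℕ → ℕ → ℂ := fun n k => ⟪e k, E n (e k)⟫_ℂ with hc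
  have hsa : ∀ n, star (E n) = E n := fun n => (hE n).1.1
  -- each E n is diagonal: E n (e k) = c n k • e k
  have hEe : ∀ n k, E n (e k) = c n k • e k := by
    intro n k
    have h0 : ∀ j, ⟪e j, E n (e k) - c n k • e k⟫_ℂ = 0 := by
      intro j
      rw [inner_sub_right, inner_smul_right, inner_e_e]
      by_cases hjk : j = k
      · subst hjk; simp [hc]
      · have hd := (hE n).2 k j (fun h => hjk h.symm)
        rw [← inner_conj_symm (e j) (E n (e k)), hd, map_zero, if_neg hjk, mul_zero, sub_zero]
    have := eq_zero_of_forall_inner e _ h0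
    rw [sub_eq_zero] at this
    exact this
  have hc01 : ∀ n k, c n k = 0 ∨ c n k = 1 := by
    intro n k
    have h1 : E n (E n (e k)) = E n (e k) := by
      have h2 := ContinuousLinearMap.ext_iff.1 (hE n).1.2 (e k)
      simpa [ContinuousLinearMap.mul_apply] using h2
    rw [hEe n k, map_smul, hEe n k, smul_smul] at h1
    have h3 : (c n k * c n k - c n k) • e k = 0 := by
      rw [sub_smul, h1, sub_self]
    rcases smul_eq_zero.1 h3 with h | h
    · have h4 : c n k * (c n k - 1) = 0 := by ring_nf; linear_combination h
      rcases mul_eq_zero.1 h4 with h5 | h5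
      · exact Or.inl h5
      · exact Or.inr (sub_eq_zero.1 h5)
    · exact absurd h (e_ne_zero e k)
  -- Step A : action of S₁ on the eigenvectors
  have key1 : ∀ m, S₁ (fv e m) = fv e m - E m (fv e m) := by
    intro m
    apply ext_inner_right ℂ
    intro y
    have h := hW₁ (fv e m) y
    have hconst : ∀ N ≥ m+1, (∑ n ∈ Finset.range N, ⟪((1 - E n) * Pj e n) (fv e m), y⟫_ℂ)
        = ⟪fv e m - E m (fv e m), y⟫_ℂ := by
      intro N hN
      have hz : ∀ n ∈ Finset.range N, n ≠ m →
          ⟪((1 - E n) * Pj e n) (fv e m), y⟫_ℂ = 0 := by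
        intro n _ hnm
        simp only [ContinuousLinearMap.mul_apply]
        rw [Pj_apply, inner_fv_fv, if_neg hnm, zero_smul, map_zero, inner_zero_left]
      rw [Finset.sum_eq_single_of_mem m (Finset.mem_range.2 (by omega)) hz]
      congr 1
      simp only [ContinuousLinearMap.mul_apply, ContinuousLinearMap.sub_apply,
        ContinuousLinearMap.one_apply]
      rw [Pj_apply, inner_fv_fv, if_pos rfl, one_smul]
    have h2 : Tendsto (fun N => ∑ n ∈ Finset.range N, ⟪((1 - E n) * Pj e n) (fv e m), y⟫_ℂ)
        atTop (𝓝 (⟪fv e m - E m (fv e m), y⟫_ℂ)) :=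
      tendsto_atTop_of_eventually_const hconst
    exact tendsto_nhds_unique h h2
  -- Step B : column finiteness
  have hcol : ∀ k, ∃ N, ∀ n, N ≤ n → c n k = 0 := by
    intro k
    set g : ℕ → ℂ := fun n => ⟪(E n * (1 - Pj e n)) (e k), e k⟫_ℂ with hg
    have hterm : Tendsto g atTop (𝓝 0) := by
      have h := hW₂ (e k) (e k)
      have h1 := (h.comp (tendsto_add_atTop_nat 1)).sub h
      simp only [sub_self] at h1
      have h2 : (fun N => (∑ n ∈ Finset.range (N+1), g n) - ∑ n ∈ Finset.range N, g n) = g :=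
        funext fun N => by rw [Finset.sum_range_succ]; ring
      rw [show ((fun N => ∑ n ∈ Finset.range N, g n) ∘ (· + 1)) =
        (fun N => ∑ n ∈ Finset.range (N+1), g n) from rfl] at h1
      rwa [h2] at h1
    have hgval : ∀ n, n ≠ k → g n = c n k * (((1 - (2 * al n * al k)^2 : ℝ)):ℂ) := by
      intro n hnk
      simp only [hg]
      simp only [ContinuousLinearMap.mul_apply, ContinuousLinearMap.sub_apply,
        ContinuousLinearMap.one_apply]
      rw [inner_selfadj (hsa n), hEe n k, inner_smul_right, inner_sub_left,
        Pj_apply, inner_smul_left, inner_fv_e, if_neg hnk, inner_e_e, if_pos rfl,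
        Complex.conj_ofReal]
      push_cast
      ring
    have hev : ∀ᶠ n in atTop, ‖g n‖ < 7/16 := by
      have h3 := hterm.norm
      simp only [norm_zero] at h3
      exact h3.eventually_lt_const (by norm_num)
    obtain ⟨N, hN⟩ := eventually_atTop.1 hev
    refine ⟨max N (k+1), fun n hn => ?_⟩
    have hnk : n ≠ k := by
      have := le_trans (le_max_right _ _) hn
      omega
    rcases hc01 n k with h0 | h1
    · exact h0
    · exfalso
      have h4 := hN n (le_trans (le_max_left _ _) hn)
      rw [hgval n hnk, h1, one_mul, Complex.norm_real, Real.norm_eq_abs] at h4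
      have hr : (2 * al n * al k)^2 ≤ 9/16 := by
        have h5 := al_mul_le n k hnk
        have h6 : 0 ≤ al n * al k := mul_nonneg (al_pos n).le (al_pos k).le
        nlinarith [h5, h6]
      rw [abs_of_nonneg (by nlinarith [sq_nonneg (2 * al n * al k)])] at h4
      linarith
  -- Step C : c m m = 1 eventually
  have hdiag : ∃ N₀, ∀ m, N₀ ≤ m → c m m = 1 := by
    have hdecay := finiteRank_inner_decay e S₁ hS₁
    have hval : ∀ m, ⟪S₁ (fv e m), e m⟫_ℂ
        = (1 - c m m) * (((1 - 2 * al m * al m : ℝ)):ℂ) := by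
      intro m
      rw [key1 m, inner_sub_left, inner_selfadj (hsa m), hEe m m, inner_smul_right,
        inner_fv_e, if_pos rfl]
      push_cast
      ring
    have hev : ∀ᶠ m in atTop, ‖⟪S₁ (fv e m), e m⟫_ℂ‖ < 5/8 := by
      have h3 := hdecay.norm
      simp only [norm_zero] at h3
      exact h3.eventually_lt_const (by norm_num)
    obtain ⟨N, hN⟩ := eventually_atTop.1 hev
    refine ⟨max N 1, fun m hm => ?_⟩
    rcases hc01 m m with h0 | h1
    · exfalso
      have h4 := hN m (le_trans (le_max_left _ _) hm)
      rw [hval m, h0, sub_zero, one_mul, Complex.norm_real, Real.norm_eq_abs] at h4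
      have hm1 : 1 ≤ m := le_trans (le_max_right _ _) hm
      have h5 : al m ≤ al 1 := al_anti hm1
      have h6 : al 1 * al 1 ≤ 3/16 := by
        have := al_sq 1
        nlinarith [al_pos 1]
      have h7 : al m * al m ≤ 3/16 := by nlinarith [al_pos m, al_pos 1]
      rw [abs_of_nonneg (by nlinarith [al_pos m])] at h4
      linarith
    · exact h1
  -- Step D/E : contradiction via linear independence
  have hfin : FiniteDimensional ℂ (LinearMap.range (S₁ : H →ₗ[ℂ] H)) := hS₁
  set V' : Submodule ℂ H := LinearMap.range (S₁ : H →ₗ[ℂ] H) ⊔ (ℂ ∙ qv e) with hV'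
  haveI : FiniteDimensional ℂ (LinearMap.range (S₁ : H →ₗ[ℂ] H)) := hfin
  haveI hV'fin : FiniteDimensional ℂ V' := Submodule.finiteDimensional_sup _ _
  set d := Module.finrank ℂ V' with hd
  choose Ncol hNcol using hcol
  obtain ⟨N₀, hN₀⟩ := hdiag
  set F : ℕ → ℕ := fun k => (Finset.range (k+1)).sup Ncol with hF
  set ms : ℕ → ℕ := seqIdx N₀ F with hms
  have hms_diag : ∀ j, c (ms j) (ms j) = 1 := fun j => hN₀ _ (seqIdx_ge N₀ F j)
  have hms_tri : ∀ i j, i < j → c (ms j) (ms i) = 0 := by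
    intro i j hij
    apply hNcol (ms i)
    calc Ncol (ms i) ≤ F (ms i) :=
          Finset.le_sup (Finset.mem_range.2 (Nat.lt_succ_self _))
      _ ≤ ms j := seqIdx_F_le N₀ F hij
  set u : ℕ → H := fun j => E (ms j) (qv e) with hu
  have hmem : ∀ j, u j ∈ V' := by
    intro j
    have hc1 : c (ms j) (ms j) = 1 := hms_diag j
    have hs : ((2 * al (ms j) : ℝ):ℂ) ≠ 0 := by
      rw [Complex.ofReal_ne_zero]
      have := al_pos (ms j)
      intro hcon
      linarith
    have hEfv : E (ms j) (fv e (ms j))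
        = e (ms j) - ((2 * al (ms j) : ℝ):ℂ) • E (ms j) (qv e) := by
      rw [fv_eq, map_sub, map_smul, hEe (ms j) (ms j), hc1, one_smul]
    have hkey : S₁ (fv e (ms j)) = ((2 * al (ms j):ℝ):ℂ) • E (ms j) (qv e)
        - ((2 * al (ms j):ℝ):ℂ) • qv e := by
      rw [key1 (ms j), hEfv, fv_eq]
      abel
    have hEq : E (ms j) (qv e)
        = ((2 * al (ms j):ℝ):ℂ)⁻¹ • S₁ (fv e (ms j)) + qv e := by
      rw [hkey, smul_sub, smul_smul, smul_smul, inv_mul_cancel₀ hs, one_smul, one_smul,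
        sub_add_cancel]
    show E (ms j) (qv e) ∈ V'
    rw [hEq]
    exact V'.add_mem (V'.smul_mem _ (Submodule.mem_sup_left ⟨fv e (ms j), rfl⟩))
      (Submodule.mem_sup_right (Submodule.mem_span_singleton_self _))
  have hinner : ∀ n k, ⟪e k, E n (qv e)⟫_ℂ = c n k * (al k : ℂ) := by
    intro n k
    rw [← inner_selfadj (hsa n), hEe n k, inner_smul_left, inner_e_qv]
    rcases hc01 n k with h | h <;> rw [h] <;> simp
  have hli : LinearIndependent ℂ (fun j : Fin (d+1) => (⟨u j, hmem j⟩ : V')) := by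
    apply LinearIndependent.of_comp V'.subtype
    have hco : (V'.subtype ∘ fun j : Fin (d+1) => (⟨u (j:ℕ), hmem (j:ℕ)⟩ : V'))
        = fun j : Fin (d+1) => u (j:ℕ) := rfl
    rw [hco]
    apply li_of_triangular (fun j : Fin (d+1) => u (j:ℕ))
      (fun j : Fin (d+1) => e (ms (j:ℕ)))
    · intro i j hij
      show ⟪e (ms (i:ℕ)), E (ms (j:ℕ)) (qv e)⟫_ℂ = 0
      rw [hinner, hms_tri (i:ℕ) (j:ℕ) (Fin.lt_iff_val_lt_val.1 hij), zero_mul]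
    · intro i
      show ⟪e (ms (i:ℕ)), E (ms (i:ℕ)) (qv e)⟫_ℂ ≠ 0
      rw [hinner, hms_diag, one_mul]
      rw [Ne, Complex.ofReal_eq_zero]
      exact ne_of_gt (al_pos _)
  have hcard := hli.fintype_card_le_finrank
  rw [Fintype.card_fin] at hcard
  omega

lemma Aop_restricted : RestrictedDiagonalizable e {T : H →L[ℂ] H | IsFiniteRankOp T} (Aop e) := by
  refine ⟨Wu e, ⟨Wu_unitary e, Wu_sub_one_finiteRank e⟩, ?_⟩
  have hD : Wu e * Aop e * star (Wu e) = Dop e := by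
    rw [star_Wu, Aop]
    simp only [mul_assoc]
    rw [Wu_mul_Wu, mul_one, Wu_Wu_cancel]
  rw [hD]
  intro m n hmn
  rw [Dop_apply_e, inner_smul_left, inner_e_e, if_neg hmn, mul_zero]

end FRCEx


/-- Example: for `J = F(H)`, which is not arithmetic mean closed, the
necessity assertion of the characterization of restricted diagonalization fails. -/
theorem finiteRank_counterexample (e : HilbertBasis ℕ ℂ H) :
    ∃ (A : H →L[ℂ] H) (lam : ℕ → ℂ) (P : ℕ → H →L[ℂ] H),
      SpectralDataOf A lam P ∧
      RestrictedDiagonalizable e {T : H →L[ℂ] H | IsFiniteRankOp T} A ∧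
      ¬ ∃ E : ℕ → H →L[ℂ] H, (∀ n, IsDiagonalProjection e (E n)) ∧
        (∃ S₁ ∈ {T : H →L[ℂ] H | IsFiniteRankOp T},
          WOTSum (fun n => (1 - E n) * P n) S₁) ∧
        (∃ S₂ ∈ {T : H →L[ℂ] H | IsFiniteRankOp T},
          WOTSum (fun n => E n * (1 - P n)) S₂) :=
  ⟨FRCEx.Aop e, FRCEx.lamC, FRCEx.Pj e, FRCEx.Aop_spectral e, FRCEx.Aop_restricted e,
    FRCEx.no_diag_seq e⟩

end
end
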